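/- arXiv:2003.05829 — 6 statements merged into one kernel-verified Lean document; each statement's English description precedes it below -/
import Mathlib

section
/- Let k ≥ 1 be an integer. There is a constant C > 0 (depending only on k) with the following two properties. (i) If w : (0,∞) → ℝ is continuously differentiable, w(r) → 0 as r → 0, and ‖w‖_H² := ∫₀^∞ (w'(r)² + k² w(r)²/r²) r dr < ∞, then sup_{r>0} |w(r)| ≤ C ‖w‖_H. (ii) If in addition w is twice continuously differentiable and D² := ∫₀^∞ (w''(r)² + k² w'(r)²/r²) r dr < ∞, then sup_{r>0} |w(r)|/r ≤ C D and ∫₀^∞ w(r)² r^{-3} dr ≤ C² D². -/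
/-!
For `u` with `u(0+) = 0` one has `u(r)² = ∫₀^r 2 u u' ≤ ∫ (u'² s + u² / s) ds ≤ ‖u‖_H²`,
because `k ≥ 1`; this is (i) with `C = 1`. For (ii) apply the same bound to `u = w'`.
This needs `w'(0+) = 0`, which finiteness of `‖∂_r w‖_H` forces: `w'²` has a limit at `0`
since its derivative `2 w' w''` is integrable there, and the limit vanishes since `w'² / s`
is integrable. Then `|w'| ≤ ‖∂_r w‖_H` and the mean value theorem gives
`|w(r)| ≤ r ‖∂_r w‖_H`. The Hardy bound integrates `w² / s³ ≤ (-w² / s²)' + w'² / s`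
(complete the square) over `[ρ, R]` and lets `ρ → 0`, where `w(ρ) / ρ → 0` by l'Hôpital,
and `R → ∞`.
-/

open MeasureTheory Set Filter
open scoped Topology

theorem exists_tendsto_nhdsGT_of_hasDerivAt_of_integrableOn {E : Type*} [NormedAddCommGroup E]
    [NormedSpace ℝ E] [CompleteSpace E] {f f' : ℝ → E} {a b : ℝ} (hab : a < b)
    (hderiv : ∀ x ∈ Ioc a b, HasDerivAt f (f' x) x) (hint : IntegrableOn f' (Ioc a b)) :
    ∃ L, Tendsto f (𝓝[>] a) (𝓝 L) := by
  have hint' : IntegrableOn f' (uIcc a b) := by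
    rwa [uIcc_of_le hab.le, integrableOn_Icc_iff_integrableOn_Ioc]
  have hprim : Tendsto (fun x => f b - ∫ t in x..b, f' t) (𝓝[>] a)
      (𝓝 (f b - ∫ t in a..b, f' t)) := by
    refine tendsto_const_nhds.sub ?_
    have := intervalIntegral.continuousOn_primitive_interval_left hint' a left_mem_uIcc
    rw [uIcc_of_le hab.le] at this
    exact this.mono_of_mem_nhdsWithin (Icc_mem_nhdsGT hab)
  refine ⟨_, hprim.congr' ?_⟩
  filter_upwards [Ioo_mem_nhdsGT hab] with x hx
  have hsub : uIcc x b ⊆ Ioc a b := by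
    rw [uIcc_of_le hx.2.le]; exact Icc_subset_Ioc_iff hx.2.le |>.2 ⟨hx.1, le_rfl⟩
  rw [intervalIntegral.integral_eq_sub_of_hasDerivAt (fun y hy => hderiv y (hsub hy))
    (hint.mono_set hsub).intervalIntegrable, sub_sub_cancel]

theorem eq_zero_of_tendsto_nhdsGT_zero_of_integrableOn_div {f : ℝ → ℝ} {L a : ℝ} (ha : 0 < a)
    (hf : Tendsto f (𝓝[>] 0) (𝓝 L)) (hint : IntegrableOn (fun s => f s / s) (Ioo 0 a)) :
    L = 0 := by
  by_contra hL
  have hbig : ∀ᶠ s in 𝓝[>] 0, |L| / 2 < |f s| ∧ s < a :=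
    (hf.abs.eventually (eventually_gt_nhds (half_lt_self (abs_pos.2 hL)))).and
      (eventually_nhdsWithin_of_eventually_nhds (eventually_lt_nhds ha))
  obtain ⟨δ, hδ, hδsub⟩ := mem_nhdsGT_iff_exists_Ioo_subset.1 hbig
  have hinv : IntegrableOn (fun s : ℝ => s⁻¹) (Ioo 0 δ) := by
    refine ((hint.mono_set fun s hs => ⟨hs.1, (hδsub hs).2⟩).norm.const_mul (2 / |L|)).mono'
      measurable_inv.aestronglyMeasurable ?_
    filter_upwards [ae_restrict_mem measurableSet_Ioo] with s hs
    have hs0 : 0 < s := hs.1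
    rw [Real.norm_eq_abs, abs_of_pos (inv_pos.2 hs0), norm_div, Real.norm_eq_abs,
      Real.norm_eq_abs, abs_of_pos hs0]
    calc s⁻¹ = 2 / |L| * (|L| / 2 / s) := by field_simp
      _ ≤ 2 / |L| * (|f s| / s) := by gcongr; exact (hδsub hs).1.le
  rcases intervalIntegrable_inv_iff.1
    ((intervalIntegrable_iff_integrableOn_Ioo_of_le (le_of_lt hδ)).2 hinv) with h | h
  · exact hδ.ne h
  · exact h left_mem_uIcc

theorem abs_le_mul_of_tendsto_nhdsGT_zero {f f' : ℝ → ℝ} {r C : ℝ} (hr : 0 < r)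
    (hderiv : ∀ x ∈ Ioc 0 r, HasDerivAt f (f' x) x) (hf : Tendsto f (𝓝[>] 0) (𝓝 0))
    (hbound : ∀ x ∈ Ioc 0 r, |f' x| ≤ C) : |f r| ≤ C * r := by
  have hstep : ∀ σ ∈ Ioo 0 r, |f r| ≤ |f σ| + C * (r - σ) := by
    intro σ hσ
    have hsub : Icc σ r ⊆ Ioc 0 r := Icc_subset_Ioc_iff hσ.2.le |>.2 ⟨hσ.1, le_rfl⟩
    have hmv := norm_image_sub_le_of_norm_deriv_le_segment'
      (fun x hx => (hderiv x (hsub hx)).hasDerivWithinAt)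
      (fun x hx => hbound x (hsub (Ico_subset_Icc_self hx))) r (right_mem_Icc.2 hσ.2.le)
    have := abs_sub_abs_le_abs_sub (f r) (f σ)
    rw [Real.norm_eq_abs] at hmv
    linarith
  have hlim : Tendsto (fun σ => |f σ| + C * (r - σ)) (𝓝[>] 0) (𝓝 (|0| + C * (r - 0))) :=
    hf.abs.add <| tendsto_const_nhds.mul <|
      tendsto_const_nhds.sub (tendsto_id.mono_left nhdsWithin_le_nhds)
  rw [abs_zero, zero_add, sub_zero] at hlim
  exact ge_of_tendsto hlim (by filter_upwards [Ioo_mem_nhdsGT hr] using hstep)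

theorem setIntegral_Ioi_le_of_setIntegral_Ioc_le {f g : ℝ → ℝ} {M : ℝ}
    (hf : ∀ s ∈ Ioi 0, 0 ≤ f s) (hfc : ContinuousOn f (Ioi 0))
    (hg : Tendsto g (𝓝[>] 0) (𝓝 0)) (hM : 0 ≤ M)
    (hbound : ∀ ρ R, 0 < ρ → ρ ≤ R → ∫ s in Ioc ρ R, f s ≤ g ρ + M) :
    ∫ s in Ioi 0, f s ≤ M := by
  have hcover : AECover (volume.restrict (Ioi (0 : ℝ))) (𝓝[>] 0) fun ρ => Ioc ρ ρ⁻¹ :=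
    (aecover_Ioi_of_Ioi (tendsto_id.mono_left nhdsWithin_le_nhds)).inter
      (aecover_Iic tendsto_inv_nhdsGT_zero)
  have hlim := hcover.lintegral_tendsto_of_countably_generated
    (ENNReal.measurable_ofReal.comp_aemeasurable (hfc.aemeasurable measurableSet_Ioi))
  have hbound' : ∀ᶠ ρ in 𝓝[>] 0,
      ∫⁻ s in Ioc ρ ρ⁻¹, ENNReal.ofReal (f s) ∂volume.restrict (Ioi 0) ≤
        ENNReal.ofReal (g ρ + M) := by
    filter_upwards [Ioo_mem_nhdsGT one_pos] with ρ hρ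
    have hρρ : ρ ≤ ρ⁻¹ := hρ.2.le.trans (one_le_inv₀ hρ.1 |>.2 hρ.2.le)
    have hsub : Ioc ρ ρ⁻¹ ⊆ Ioi 0 := fun s hs => hρ.1.trans hs.1
    have hsubIcc : Icc ρ ρ⁻¹ ⊆ Ioi 0 := fun s hs => hρ.1.trans_le hs.1
    rw [Measure.restrict_restrict measurableSet_Ioc, inter_eq_self_of_subset_left hsub,
      ← ofReal_integral_eq_lintegral_ofReal
        ((hfc.mono hsubIcc).integrableOn_Icc.mono_set Ioc_subset_Icc_self)
        ((ae_restrict_mem measurableSet_Ioc).mono fun s hs => hf s (hsub hs))]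
    exact ENNReal.ofReal_le_ofReal (hbound ρ ρ⁻¹ hρ.1 hρρ)
  have hlint : ∫⁻ s in Ioi 0, ENNReal.ofReal (f s) ≤ ENNReal.ofReal M := by
    simpa using le_of_tendsto_of_tendsto hlim
      ((ENNReal.continuous_ofReal.tendsto _).comp (hg.add_const M)) hbound'
  rw [integral_eq_lintegral_of_nonneg_ae ((ae_restrict_mem measurableSet_Ioi).mono hf)
    (hfc.aestronglyMeasurable measurableSet_Ioi)]
  exact ENNReal.toReal_le_of_le_ofReal hM hlint

theorem setIntegral_Ioc_sq_div_pow_three_le {f f' : ℝ → ℝ} {ρ R : ℝ} (hρ : 0 < ρ) (hρR : ρ ≤ R)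
    (hderiv : ∀ x ∈ Icc ρ R, HasDerivAt f (f' x) x) (hf' : ContinuousOn f' (Icc ρ R)) :
    ∫ s in Ioc ρ R, f s ^ 2 / s ^ 3 ≤ f ρ ^ 2 / ρ ^ 2 + ∫ s in Ioc ρ R, f' s ^ 2 / s := by
  have hpos : ∀ x ∈ Icc ρ R, 0 < x := fun x hx => hρ.trans_le hx.1
  have hfc : ContinuousOn f (Icc ρ R) := fun x hx => (hderiv x hx).continuousAt.continuousWithinAt
  have hint : ∀ {h : ℝ → ℝ}, ContinuousOn h (Icc ρ R) → IntegrableOn h (Ioc ρ R) :=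
    fun hc => hc.integrableOn_Icc.mono_set Ioc_subset_Icc_self
  have hcube : ContinuousOn (fun s => f s ^ 2 / s ^ 3) (Icc ρ R) :=
    (hfc.pow 2).div (continuousOn_pow 3) fun x hx => (pow_pos (hpos x hx) 3).ne'
  have hmixed : ContinuousOn (fun s => 2 * f s ^ 2 / s ^ 3 - 2 * f s * f' s / s ^ 2) (Icc ρ R) :=
    ((continuousOn_const.mul (hfc.pow 2)).div (continuousOn_pow 3)
      fun x hx => (pow_pos (hpos x hx) 3).ne').sub
    (((continuousOn_const.mul hfc).mul hf').div (continuousOn_pow 2)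
      fun x hx => (pow_pos (hpos x hx) 2).ne')
  have hdiv : ContinuousOn (fun s => f' s ^ 2 / s) (Icc ρ R) :=
    (hf'.pow 2).div continuousOn_id fun x hx => (hpos x hx).ne'
  have hftc : ∫ s in Ioc ρ R, (2 * f s ^ 2 / s ^ 3 - 2 * f s * f' s / s ^ 2) =
      f ρ ^ 2 / ρ ^ 2 - f R ^ 2 / R ^ 2 := by
    rw [← intervalIntegral.integral_of_le hρR, intervalIntegral.integral_eq_sub_of_hasDerivAt
      (f := fun s => -(f s ^ 2 / s ^ 2)) _ (hmixed.intervalIntegrable_of_Icc hρR)]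
    · ring
    · intro x hx
      rw [uIcc_of_le hρR] at hx
      have hx0 := (hpos x hx).ne'
      refine (((hderiv x hx).pow 2).div (hasDerivAt_pow 2 x) (pow_ne_zero 2 hx0)).neg.congr_deriv
        ?_
      simp only [Pi.pow_apply]
      field_simp
      ring
  calc ∫ s in Ioc ρ R, f s ^ 2 / s ^ 3
      ≤ ∫ s in Ioc ρ R, ((2 * f s ^ 2 / s ^ 3 - 2 * f s * f' s / s ^ 2) + f' s ^ 2 / s) := by
        refine setIntegral_mono_on (hint hcube) ((hint hmixed).add (hint hdiv)) measurableSet_Ioc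
          fun s hs => ?_
        have hs0 := hpos s (Ioc_subset_Icc_self hs)
        have hsq : 2 * f s ^ 2 / s ^ 3 - 2 * f s * f' s / s ^ 2 + f' s ^ 2 / s - f s ^ 2 / s ^ 3 =
            (f s / s - f' s) ^ 2 / s := by
          field_simp
          ring
        have : 0 ≤ (f s / s - f' s) ^ 2 / s := by positivity
        linarith
    _ = f ρ ^ 2 / ρ ^ 2 - f R ^ 2 / R ^ 2 + ∫ s in Ioc ρ R, f' s ^ 2 / s := by
        rw [integral_add (hint hmixed) (hint hdiv), hftc]
    _ ≤ f ρ ^ 2 / ρ ^ 2 + ∫ s in Ioc ρ R, f' s ^ 2 / s := by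
        have : 0 ≤ f R ^ 2 / R ^ 2 := by positivity
        linarith

/-- The integrand of `‖u‖_H²`, with `u'` standing for the derivative of `u`;
the integrand of `‖∂_r w‖_H²` is `hNormDensity k w' w''`. -/
noncomputable def hNormDensity (k : ℝ) (u u' : ℝ → ℝ) (s : ℝ) : ℝ :=
  (u' s ^ 2 + k ^ 2 * u s ^ 2 / s ^ 2) * s

section hNormDensity

variable {k : ℝ} {u u' : ℝ → ℝ} {s : ℝ}

theorem hNormDensity_nonneg (hs : 0 < s) : 0 ≤ hNormDensity k u u' s := by
  unfold hNormDensity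
  positivity

theorem sq_mul_add_sq_div_le_hNormDensity (hk : 1 ≤ k) (hs : 0 < s) :
    u' s ^ 2 * s + u s ^ 2 / s ≤ hNormDensity k u u' s := by
  have hexpand : hNormDensity k u u' s = u' s ^ 2 * s + k ^ 2 * (u s ^ 2 / s) := by
    unfold hNormDensity
    field_simp
  rw [hexpand]
  gcongr
  exact le_mul_of_one_le_left (by positivity) (one_le_pow₀ hk)

theorem sq_div_le_hNormDensity (hk : 1 ≤ k) (hs : 0 < s) :
    u s ^ 2 / s ≤ hNormDensity k u u' s :=
  (le_add_of_nonneg_left (by positivity)).trans (sq_mul_add_sq_div_le_hNormDensity hk hs)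

theorem abs_two_mul_le_hNormDensity (hk : 1 ≤ k) (hs : 0 < s) :
    |2 * u s * u' s| ≤ hNormDensity k u u' s := by
  have hamgm : u' s ^ 2 * s + u s ^ 2 / s - |2 * u s * u' s| = (|u' s| * s - |u s|) ^ 2 / s := by
    rw [abs_mul, abs_mul, abs_two]
    field_simp
    linear_combination s ^ 2 * (sq_abs (u' s)).symm + (sq_abs (u s)).symm
  have : 0 ≤ (|u' s| * s - |u s|) ^ 2 / s := by positivity
  linarith [sq_mul_add_sq_div_le_hNormDensity (u := u) (u' := u') hk hs]

theorem setIntegral_Ioc_le_integral_hNormDensity {h : ℝ → ℝ} {ρ r : ℝ} (hρ : 0 ≤ ρ)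
    (hint : IntegrableOn (hNormDensity k u u') (Ioi 0)) (hh : IntegrableOn h (Ioc ρ r))
    (hle : ∀ s ∈ Ioc ρ r, h s ≤ hNormDensity k u u' s) :
    ∫ s in Ioc ρ r, h s ≤ ∫ s in Ioi 0, hNormDensity k u u' s := by
  have hsub : Ioc ρ r ⊆ Ioi 0 := fun s hs => hρ.trans_lt hs.1
  calc ∫ s in Ioc ρ r, h s ≤ ∫ s in Ioc ρ r, hNormDensity k u u' s :=
        setIntegral_mono_on hh (hint.mono_set hsub) measurableSet_Ioc hle
    _ ≤ ∫ s in Ioi 0, hNormDensity k u u' s :=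
        setIntegral_mono_set hint
          ((ae_restrict_mem measurableSet_Ioi).mono fun s hs => hNormDensity_nonneg hs)
          hsub.eventuallyLE

theorem sq_le_integral_hNormDensity (hk : 1 ≤ k) (hderiv : ∀ x ∈ Ioi 0, HasDerivAt u (u' x) x)
    (hu' : ContinuousOn u' (Ioi 0)) (hint : IntegrableOn (hNormDensity k u u') (Ioi 0))
    (hu : Tendsto u (𝓝[>] 0) (𝓝 0)) {r : ℝ} (hr : 0 < r) :
    u r ^ 2 ≤ ∫ s in Ioi 0, hNormDensity k u u' s := by
  set I := ∫ s in Ioi 0, hNormDensity k u u' s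
  have hstep : ∀ ρ ∈ Ioo 0 r, u r ^ 2 ≤ u ρ ^ 2 + I := by
    intro ρ hρ
    have hsub : Icc ρ r ⊆ Ioi 0 := fun x hx => hρ.1.trans_le hx.1
    have hcont : ContinuousOn (fun s => 2 * u s * u' s) (Icc ρ r) :=
      (continuousOn_const.mul fun x hx =>
        (hderiv x (hsub hx)).continuousAt.continuousWithinAt).mul (hu'.mono hsub)
    have hftc : ∫ s in Ioc ρ r, 2 * u s * u' s = u r ^ 2 - u ρ ^ 2 := by
      rw [← intervalIntegral.integral_of_le hρ.2.le]
      refine intervalIntegral.integral_eq_sub_of_hasDerivAt (f := fun s => u s ^ 2)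
        (fun x hx => ?_) (hcont.intervalIntegrable_of_Icc hρ.2.le)
      rw [uIcc_of_le hρ.2.le] at hx
      exact ((hderiv x (hsub hx)).pow 2).congr_deriv (by push_cast; ring)
    have := setIntegral_Ioc_le_integral_hNormDensity hρ.1.le hint
      (hcont.integrableOn_Icc.mono_set Ioc_subset_Icc_self)
      fun s hs => (le_abs_self _).trans (abs_two_mul_le_hNormDensity hk (hρ.1.trans hs.1))
    linarith
  have hlim : Tendsto (fun ρ => u ρ ^ 2 + I) (𝓝[>] 0) (𝓝 (0 ^ 2 + I)) :=
    (hu.pow 2).add_const I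
  rw [zero_pow two_ne_zero, zero_add] at hlim
  exact ge_of_tendsto hlim (by filter_upwards [Ioo_mem_nhdsGT hr] using hstep)

theorem tendsto_nhdsGT_zero_of_integrableOn_hNormDensity (hk : 1 ≤ k)
    (hderiv : ∀ x ∈ Ioi 0, HasDerivAt u (u' x) x) (hu' : ContinuousOn u' (Ioi 0))
    (hint : IntegrableOn (hNormDensity k u u') (Ioi 0)) : Tendsto u (𝓝[>] 0) (𝓝 0) := by
  have hsub : Ioc (0 : ℝ) 1 ⊆ Ioi 0 := fun x hx => hx.1
  have hcont : ContinuousOn u (Ioi 0) := fun x hx => (hderiv x hx).continuousAt.continuousWithinAt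
  have hdom : ∀ {h : ℝ → ℝ}, ContinuousOn h (Ioi 0) →
      (∀ s ∈ Ioi 0, ‖h s‖ ≤ hNormDensity k u u' s) → IntegrableOn h (Ioc 0 1) := fun hc hle =>
    (hint.mono_set hsub).mono' ((hc.mono hsub).aestronglyMeasurable measurableSet_Ioc)
      ((ae_restrict_mem measurableSet_Ioc).mono fun s hs => hle s (hsub hs))
  obtain ⟨L, hL⟩ := exists_tendsto_nhdsGT_of_hasDerivAt_of_integrableOn (f := fun s => u s ^ 2)
    (f' := fun s => 2 * u s * u' s) one_pos
    (fun x hx => ((hderiv x (hsub hx)).pow 2).congr_deriv (by push_cast; ring))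
    (hdom ((continuousOn_const.mul hcont).mul hu') fun s hs => abs_two_mul_le_hNormDensity hk hs)
  have hdiv : IntegrableOn (fun s => u s ^ 2 / s) (Ioo 0 1) :=
    (hdom ((hcont.pow 2).div continuousOn_id fun s hs => ne_of_gt hs) fun s hs => by
      rw [Real.norm_eq_abs, abs_of_nonneg (div_nonneg (sq_nonneg _) (le_of_lt hs))]
      exact sq_div_le_hNormDensity hk hs).mono_set Ioo_subset_Ioc_self
  obtain rfl := eq_zero_of_tendsto_nhdsGT_zero_of_integrableOn_div one_pos hL hdiv
  have habs := hL.sqrt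
  simp only [Real.sqrt_sq_eq_abs, Real.sqrt_zero] at habs
  exact tendsto_zero_iff_abs_tendsto_zero _ |>.2 habs

end hNormDensity

theorem integral_sq_div_pow_three_le_integral_hNormDensity {k : ℝ} {w w' w'' : ℝ → ℝ}
    (hk : 1 ≤ k) (hw : ∀ x ∈ Ioi 0, HasDerivAt w (w' x) x)
    (hw' : ∀ x ∈ Ioi 0, HasDerivAt w' (w'' x) x) (hw'' : ContinuousOn w'' (Ioi 0))
    (hw0 : Tendsto w (𝓝[>] 0) (𝓝 0)) (hint : IntegrableOn (hNormDensity k w' w'') (Ioi 0)) :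
    ∫ s in Ioi 0, w s ^ 2 / s ^ 3 ≤ ∫ s in Ioi 0, hNormDensity k w' w'' s := by
  have hwc : ContinuousOn w (Ioi 0) := fun x hx => (hw x hx).continuousAt.continuousWithinAt
  have hw'c : ContinuousOn w' (Ioi 0) := fun x hx => (hw' x hx).continuousAt.continuousWithinAt
  have hw'0 := tendsto_nhdsGT_zero_of_integrableOn_hNormDensity hk hw' hw'' hint
  have hquot : Tendsto (fun s => w s / s) (𝓝[>] 0) (𝓝 0) :=
    HasDerivAt.lhopital_zero_right_on_Ioo one_pos (fun x hx => hw x hx.1)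
      (fun x _ => hasDerivAt_id x) (fun _ _ => one_ne_zero) hw0
      (tendsto_id.mono_left nhdsWithin_le_nhds) (by simpa using hw'0)
  refine setIntegral_Ioi_le_of_setIntegral_Ioc_le (g := fun ρ => w ρ ^ 2 / ρ ^ 2)
    (fun s hs => by have : 0 < s := hs; positivity)
    ((hwc.pow 2).div (continuousOn_pow 3) fun s hs => (pow_pos hs 3).ne')
    (by simpa [div_pow] using hquot.pow 2)
    (setIntegral_nonneg measurableSet_Ioi fun s hs => hNormDensity_nonneg hs)
    fun ρ R hρ hρR => ?_
  have hsub : Icc ρ R ⊆ Ioi 0 := fun x hx => hρ.trans_le hx.1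
  refine (setIntegral_Ioc_sq_div_pow_three_le hρ hρR (fun x hx => hw x (hsub hx))
    (hw'c.mono hsub)).trans ?_
  gcongr
  have hdiv : ContinuousOn (fun s => w' s ^ 2 / s) (Icc ρ R) :=
    ((hw'c.mono hsub).pow 2).div continuousOn_id fun x hx => (hsub hx).ne'
  exact setIntegral_Ioc_le_integral_hNormDensity hρ.le hint
    (hdiv.integrableOn_Icc.mono_set Ioc_subset_Icc_self)
    fun s hs => sq_div_le_hNormDensity hk (hρ.trans hs.1)

/-- pointwise bound `‖w‖_∞ ≲ ‖w‖_H`, and the second-order bounds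
`‖w/r‖_∞ ≲ ‖∂_r w‖_H`, `‖w/r²‖_{L²} ≲ ‖∂_r w‖_H` for radial profiles on `(0,∞)`
with respect to the measure `r dr`. -/
theorem stmt0 (k : ℕ) (hk : 1 ≤ k) :
    ∃ C : ℝ, 0 < C ∧
      ((∀ w w' : ℝ → ℝ,
          (∀ r ∈ Ioi (0 : ℝ), HasDerivAt w (w' r) r) →
          ContinuousOn w' (Ioi 0) →
          Tendsto w (nhdsWithin 0 (Ioi 0)) (nhds 0) →
          IntegrableOn (fun r => (w' r ^ 2 + (k : ℝ) ^ 2 * w r ^ 2 / r ^ 2) * r) (Ioi 0) →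
          ∀ r ∈ Ioi (0 : ℝ),
            |w r| ≤ C * Real.sqrt
              (∫ s in Ioi (0 : ℝ), (w' s ^ 2 + (k : ℝ) ^ 2 * w s ^ 2 / s ^ 2) * s)) ∧
       (∀ w w' w'' : ℝ → ℝ,
          (∀ r ∈ Ioi (0 : ℝ), HasDerivAt w (w' r) r) →
          (∀ r ∈ Ioi (0 : ℝ), HasDerivAt w' (w'' r) r) →
          ContinuousOn w'' (Ioi 0) →
          Tendsto w (nhdsWithin 0 (Ioi 0)) (nhds 0) →
          IntegrableOn (fun r => (w' r ^ 2 + (k : ℝ) ^ 2 * w r ^ 2 / r ^ 2) * r) (Ioi 0) →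
          IntegrableOn (fun r => (w'' r ^ 2 + (k : ℝ) ^ 2 * w' r ^ 2 / r ^ 2) * r) (Ioi 0) →
          (∀ r ∈ Ioi (0 : ℝ),
            |w r| / r ≤ C * Real.sqrt
              (∫ s in Ioi (0 : ℝ), (w'' s ^ 2 + (k : ℝ) ^ 2 * w' s ^ 2 / s ^ 2) * s)) ∧
          (∫ s in Ioi (0 : ℝ), w s ^ 2 / s ^ 3) ≤
            C ^ 2 * ∫ s in Ioi (0 : ℝ), (w'' s ^ 2 + (k : ℝ) ^ 2 * w' s ^ 2 / s ^ 2) * s)) := by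
  have hk' : (1 : ℝ) ≤ k := by exact_mod_cast hk
  refine ⟨1, one_pos, fun w w' hw hw' hw0 hint r hr => ?_,
    fun w w' w'' hw hw' hw'' hw0 _ hint => ⟨fun r hr => ?_, ?_⟩⟩
  · rw [one_mul]
    exact Real.abs_le_sqrt (sq_le_integral_hNormDensity hk' hw hw' hint hw0 hr)
  · have hw'0 := tendsto_nhdsGT_zero_of_integrableOn_hNormDensity hk' hw' hw'' hint
    rw [one_mul, div_le_iff₀ hr]
    exact abs_le_mul_of_tendsto_nhdsGT_zero hr (fun x hx => hw x hx.1) hw0 fun x hx =>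
      Real.abs_le_sqrt (sq_le_integral_hNormDensity hk' hw' hw'' hint hw'0 hx.1)
  · rw [one_pow, one_mul]
    exact integral_sq_div_pow_three_le_integral_hNormDensity hk' hw hw' hw'' hw0 hint
end

section
/- Let k ≥ 4 be an integer. There is a constant C > 0 such that for all λ, μ > 0 with ν := λ/μ ≤ 1/2, writing ΛQ_{σ̲}(r) := σ^{-1} ΛQ(r/σ) and (Λ₀ΛQ)_{σ̲}(r) := σ^{-1} (Λ₀ΛQ)(r/σ), one has |∫₀^∞ ΛQ_{λ̲}(r) ΛQ_{μ̲}(r) r dr| + |∫₀^∞ (Λ₀ΛQ)_{λ̲}(r) ΛQ_{μ̲}(r) r dr| + |∫₀^∞ ΛQ_{λ̲}(r) (Λ₀ΛQ)_{μ̲}(r) r dr| ≤ C ν^{k-1}. -/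
/-!
Substituting `r = μ t` turns each pairing into `∫ f_ν(t) g(t) t dt` with `ν = λ/μ`. Both profiles
are bounded by a multiple of `min (t^k) (t^{-k})`, and the decay of `f` gives
`|f_ν(t)| ≤ A ν^{k-1} t^{-k}`. Hence the integrand is at most `A B ν^{k-1} t` on `(0, 1]` and
`A B ν^{k-1} t^{1-2k}` on `(1, ∞)`, and both majorants are integrable because `k ≥ 2`.
-/

open MeasureTheory Set Filter

noncomputable section

/-- `ΛQ(r) = 2k r^k / (1 + r^{2k})`. -/
def LamQ (k : ℕ) (r : ℝ) : ℝ := 2 * k * r ^ k / (1 + r ^ (2 * k))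

/-- `Λ₀ΛQ(r) = ΛQ(r) + r (ΛQ)'(r)`. -/
def Lam0LamQ (k : ℕ) (r : ℝ) : ℝ := LamQ k r + r * deriv (LamQ k) r

section Profile

lemma one_add_pow_two_mul_pos (k : ℕ) (x : ℝ) : 0 < 1 + x ^ (2 * k) := by
  have : 0 ≤ x ^ (2 * k) := by rw [pow_mul']; positivity
  linarith

lemma measurable_LamQ (k : ℕ) : Measurable (LamQ k) := by
  unfold LamQ
  fun_prop

lemma measurable_Lam0LamQ (k : ℕ) : Measurable (Lam0LamQ k) :=
  (measurable_LamQ k).add (measurable_id.mul (measurable_deriv _))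

lemma Lam0LamQ_eq (k : ℕ) (x : ℝ) :
    Lam0LamQ k x = 2 * k * x ^ k * ((k + 1) - (k - 1) * x ^ (2 * k)) / (1 + x ^ (2 * k)) ^ 2 := by
  have hd := one_add_pow_two_mul_pos k x
  have hderiv := ((hasDerivAt_pow k x).const_mul (2 * (k : ℝ))).div
    ((hasDerivAt_pow (2 * k) x).const_add 1) hd.ne'
  rw [Lam0LamQ, show deriv (LamQ k) x = _ from hderiv.deriv, LamQ]
  rcases Nat.eq_zero_or_pos k with rfl | hk
  · simp
  have h₁ : x * x ^ (k - 1) = x ^ k := by rw [← pow_succ', Nat.sub_add_cancel hk]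
  have h₂ : x * x ^ (2 * k - 1) = x ^ (2 * k) := by rw [← pow_succ', Nat.sub_add_cancel (by omega)]
  have hnum : x * (2 * k * (k * x ^ (k - 1)) * (1 + x ^ (2 * k)) -
      2 * k * x ^ k * ((2 * k : ℕ) * x ^ (2 * k - 1))) =
      2 * k * k * x ^ k * (1 + x ^ (2 * k)) - 4 * k * k * x ^ k * x ^ (2 * k) := by
    push_cast
    linear_combination (2 * k * k * (1 + x ^ (2 * k))) * h₁ - 4 * k * k * x ^ k * h₂
  rw [mul_div_assoc', hnum]
  field_simp
  ring

variable {k : ℕ} {x : ℝ}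

lemma LamQ_nonneg (hx : 0 ≤ x) : 0 ≤ LamQ k x := by
  unfold LamQ
  have := one_add_pow_two_mul_pos k x
  positivity

lemma LamQ_le_mul_pow (hx : 0 ≤ x) : LamQ k x ≤ 2 * k * x ^ k := by
  have hd := one_add_pow_two_mul_pos k x
  rw [LamQ, div_le_iff₀ hd]
  have : 0 ≤ 2 * (k : ℝ) * x ^ k * x ^ (2 * k) := by rw [pow_mul']; positivity
  nlinarith

lemma LamQ_le_div_pow (hx : 0 < x) : LamQ k x ≤ 2 * k / x ^ k := by
  have hxk := pow_pos hx k
  have hk : 0 ≤ 2 * (k : ℝ) := by positivity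
  rw [LamQ, div_le_div_iff₀ (one_add_pow_two_mul_pos k x) hxk, pow_mul']
  nlinarith

lemma abs_Lam0LamQ_le (hx : 0 ≤ x) : |Lam0LamQ k x| ≤ (k + 1) * LamQ k x := by
  have hd := one_add_pow_two_mul_pos k x
  have hy : 0 ≤ x ^ (2 * k) := by rw [pow_mul']; positivity
  have hxk : 0 ≤ 2 * (k : ℝ) * x ^ k := by positivity
  rw [Lam0LamQ_eq, LamQ, abs_div, abs_mul, abs_of_nonneg hxk, abs_of_pos (pow_pos hd 2)]
  calc _ ≤ 2 * k * x ^ k * ((k + 1) * (1 + x ^ (2 * k))) / (1 + x ^ (2 * k)) ^ 2 := by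
        gcongr
        rw [abs_le]
        constructor <;> nlinarith
    _ = _ := by field_simp

lemma abs_LamQ_le_mul_pow (hx : 0 ≤ x) : |LamQ k x| ≤ 2 * k * x ^ k :=
  (abs_of_nonneg (LamQ_nonneg hx)).trans_le (LamQ_le_mul_pow hx)

lemma abs_LamQ_le_div_pow (hx : 0 < x) : |LamQ k x| ≤ 2 * k / x ^ k :=
  (abs_of_nonneg (LamQ_nonneg hx.le)).trans_le (LamQ_le_div_pow hx)

lemma abs_Lam0LamQ_le_mul_pow (hx : 0 ≤ x) : |Lam0LamQ k x| ≤ (k + 1) * (2 * k) * x ^ k := by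
  rw [mul_assoc]
  exact (abs_Lam0LamQ_le hx).trans (by gcongr; exact LamQ_le_mul_pow hx)

lemma abs_Lam0LamQ_le_div_pow (hx : 0 < x) : |Lam0LamQ k x| ≤ (k + 1) * (2 * k) / x ^ k := by
  rw [mul_div_assoc]
  exact (abs_Lam0LamQ_le hx.le).trans (by gcongr; exact LamQ_le_div_pow hx)

end Profile

def rescale (σ : ℝ) (g : ℝ → ℝ) (r : ℝ) : ℝ := σ⁻¹ * g (r / σ)

lemma integral_rescale_mul_rescale (f g : ℝ → ℝ) {lam mu : ℝ} (hl : 0 < lam) (hm : 0 < mu) :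
    ∫ r in Ioi 0, rescale lam f r * rescale mu g r * r =
      ∫ r in Ioi 0, rescale (lam / mu) f r * g r * r := by
  have h := integral_comp_mul_left_Ioi' (fun r => rescale lam f r * rescale mu g r * r) 0 hm
  rw [mul_zero] at h
  rw [← h, smul_eq_mul, ← integral_const_mul]
  congr 1
  funext r
  simp only [rescale]
  field_simp

lemma abs_setIntegral_Ioi_zero_le {F : ℝ → ℝ} (hF : AEStronglyMeasurable F (volume.restrict (Ioi 0)))
    {c s : ℝ} (hs : s < -1) (h_small : ∀ r ∈ Ioc 0 1, |F r| ≤ c * r)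
    (h_large : ∀ r ∈ Ioi 1, |F r| ≤ c * r ^ s) :
    |∫ r in Ioi 0, F r| ≤ c * (1 / 2 - 1 / (s + 1)) := by
  have hG₀ : IntegrableOn (fun r => c * r) (Ioc 0 1) :=
    (continuous_const.mul continuous_id).integrableOn_Ioc
  have hG₁ : IntegrableOn (fun r => c * r ^ s) (Ioi 1) :=
    (integrableOn_Ioi_rpow_of_lt hs one_pos).const_mul c
  have hle₀ : ∀ᵐ r ∂volume.restrict (Ioc 0 1), ‖F r‖ ≤ c * r :=
    ae_restrict_of_forall_mem measurableSet_Ioc h_small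
  have hle₁ : ∀ᵐ r ∂volume.restrict (Ioi 1), ‖F r‖ ≤ c * r ^ s :=
    ae_restrict_of_forall_mem measurableSet_Ioi h_large
  have hF₀ : IntegrableOn F (Ioc 0 1) := hG₀.mono' (hF.mono_set Ioc_subset_Ioi_self) hle₀
  have hF₁ : IntegrableOn F (Ioi 1) :=
    hG₁.mono' (hF.mono_set (Ioi_subset_Ioi zero_le_one)) hle₁
  have hI₀ : |∫ r in Ioc 0 1, F r| ≤ c / 2 := by
    calc |∫ r in Ioc 0 1, F r| ≤ ∫ r in Ioc 0 1, c * r := norm_integral_le_of_norm_le hG₀ hle₀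
      _ = c / 2 := by
        rw [← intervalIntegral.integral_of_le zero_le_one, intervalIntegral.integral_const_mul,
          integral_id]
        ring
  have hI₁ : |∫ r in Ioi 1, F r| ≤ c * (-1 / (s + 1)) := by
    calc |∫ r in Ioi 1, F r| ≤ ∫ r in Ioi 1, c * r ^ s := norm_integral_le_of_norm_le hG₁ hle₁
      _ = c * (-1 / (s + 1)) := by
        rw [integral_const_mul, integral_Ioi_rpow_of_lt hs one_pos, Real.one_rpow]
  rw [← Ioc_union_Ioi_eq_Ioi zero_le_one,
    setIntegral_union (Ioc_disjoint_Ioi le_rfl) measurableSet_Ioi hF₀ hF₁]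
  calc _ ≤ c / 2 + c * (-1 / (s + 1)) := (abs_add_le _ _).trans (add_le_add hI₀ hI₁)
    _ = _ := by ring

lemma abs_rescale_le_of_abs_le_div_pow {k : ℕ} (hk : k ≠ 0) {f : ℝ → ℝ} {A : ℝ}
    (hf : ∀ x, 0 < x → |f x| ≤ A / x ^ k) {ν r : ℝ} (hν : 0 < ν) (hr : 0 < r) :
    |rescale ν f r| ≤ A * ν ^ (k - 1) / r ^ k := by
  rw [rescale, abs_mul, abs_inv, abs_of_pos hν]
  calc ν⁻¹ * |f (r / ν)| ≤ ν⁻¹ * (A / (r / ν) ^ k) := by gcongr; exact hf _ (div_pos hr hν)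
    _ = A * ν ^ (k - 1) / r ^ k := by
      rw [div_pow, ← pow_sub_one_mul hk ν]
      field_simp

lemma abs_integral_rescale_mul_le {k : ℕ} (hk : 2 ≤ k) {f g : ℝ → ℝ} (hf : Measurable f)
    (hg : Measurable g) {A B : ℝ} (hf_decay : ∀ x, 0 < x → |f x| ≤ A / x ^ k)
    (hg_zero : ∀ x, 0 < x → |g x| ≤ B * x ^ k) (hg_decay : ∀ x, 0 < x → |g x| ≤ B / x ^ k)
    {ν : ℝ} (hν : 0 < ν) :
    |∫ r in Ioi 0, rescale ν f r * g r * r| ≤ A * B * ν ^ (k - 1) := by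
  have hA : 0 ≤ A := by simpa using (abs_nonneg _).trans (hf_decay 1 one_pos)
  have hB : 0 ≤ B := by simpa using (abs_nonneg _).trans (hg_zero 1 one_pos)
  have hmeas : AEStronglyMeasurable (fun r => rescale ν f r * g r * r) (volume.restrict (Ioi 0)) := by
    unfold rescale
    fun_prop
  have hbound : ∀ r, 0 < r → |rescale ν f r * g r * r| ≤
      A * ν ^ (k - 1) / r ^ k * |g r| * r := by
    intro r hr
    rw [abs_mul, abs_mul, abs_of_pos hr]
    gcongr
    exact abs_rescale_le_of_abs_le_div_pow (by omega) hf_decay hν hr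
  have hk' : (2 : ℝ) ≤ k := by exact_mod_cast hk
  have hs : (1 - 2 * k : ℝ) < -1 := by linarith
  refine (abs_setIntegral_Ioi_zero_le (c := A * B * ν ^ (k - 1)) hmeas hs ?_ ?_).trans ?_
  · rintro r ⟨hr, -⟩
    calc _ ≤ A * ν ^ (k - 1) / r ^ k * |g r| * r := hbound r hr
      _ ≤ A * ν ^ (k - 1) / r ^ k * (B * r ^ k) * r := by gcongr; exact hg_zero r hr
      _ = A * B * ν ^ (k - 1) * r := by field_simp
  · intro r hr
    have hr₀ : 0 < r := one_pos.trans hr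
    calc _ ≤ A * ν ^ (k - 1) / r ^ k * |g r| * r := hbound r hr₀
      _ ≤ A * ν ^ (k - 1) / r ^ k * (B / r ^ k) * r := by gcongr; exact hg_decay r hr₀
      _ = A * B * ν ^ (k - 1) * r ^ (1 - 2 * k : ℝ) := by
        rw [Real.rpow_sub hr₀, Real.rpow_one, show (2 * k : ℝ) = (2 * k : ℕ) by push_cast; ring,
          Real.rpow_natCast, pow_mul']
        field_simp
  · have hhalf : -1 / 2 ≤ 1 / (1 - 2 * k + 1 : ℝ) := by
      rw [le_div_iff_of_neg (by linarith)]
      linarith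
    calc _ ≤ A * B * ν ^ (k - 1) * 1 := by gcongr; linarith
      _ = _ := mul_one _

lemma abs_integral_rescale_mul_rescale_le {k : ℕ} (hk : 2 ≤ k) {f g : ℝ → ℝ} (hf : Measurable f)
    (hg : Measurable g) {A B : ℝ} (hf_decay : ∀ x, 0 < x → |f x| ≤ A / x ^ k)
    (hg_zero : ∀ x, 0 < x → |g x| ≤ B * x ^ k) (hg_decay : ∀ x, 0 < x → |g x| ≤ B / x ^ k)
    {lam mu : ℝ} (hl : 0 < lam) (hm : 0 < mu) :
    |∫ r in Ioi 0, rescale lam f r * rescale mu g r * r| ≤ A * B * (lam / mu) ^ (k - 1) := by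
  rw [integral_rescale_mul_rescale f g hl hm]
  exact abs_integral_rescale_mul_le hk hf hg hf_decay hg_zero hg_decay (div_pos hl hm)

/-- interaction estimates between the two bubbles:
`|⟨ΛQ_λ̲|ΛQ_μ̲⟩| + |⟨(Λ₀ΛQ)_λ̲|ΛQ_μ̲⟩| + |⟨ΛQ_λ̲|(Λ₀ΛQ)_μ̲⟩| ≲ ν^{k-1}`, `ν = λ/μ`. -/
theorem stmt3 (k : ℕ) (hk : 4 ≤ k) :
    ∃ C : ℝ, 0 < C ∧
      ∀ lam mu : ℝ, 0 < lam → 0 < mu → lam / mu ≤ 1 / 2 →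
        |∫ r in Ioi (0 : ℝ), (lam⁻¹ * LamQ k (r / lam)) * (mu⁻¹ * LamQ k (r / mu)) * r| +
        |∫ r in Ioi (0 : ℝ), (lam⁻¹ * Lam0LamQ k (r / lam)) * (mu⁻¹ * LamQ k (r / mu)) * r| +
        |∫ r in Ioi (0 : ℝ), (lam⁻¹ * LamQ k (r / lam)) * (mu⁻¹ * Lam0LamQ k (r / mu)) * r|
          ≤ C * (lam / mu) ^ (k - 1) := by
  have hk₀ : 0 < k := by omega
  refine ⟨4 * k ^ 2 * (2 * k + 3), by positivity, fun lam mu hl hm _ => ?_⟩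
  have hQQ := abs_integral_rescale_mul_rescale_le (by omega) (measurable_LamQ k)
    (measurable_LamQ k) (fun x hx => abs_LamQ_le_div_pow hx)
    (fun x hx => abs_LamQ_le_mul_pow hx.le) (fun x hx => abs_LamQ_le_div_pow hx) hl hm
  have hΛQ := abs_integral_rescale_mul_rescale_le (by omega) (measurable_Lam0LamQ k)
    (measurable_LamQ k) (fun x hx => abs_Lam0LamQ_le_div_pow hx)
    (fun x hx => abs_LamQ_le_mul_pow hx.le) (fun x hx => abs_LamQ_le_div_pow hx) hl hm
  have hQΛ := abs_integral_rescale_mul_rescale_le (by omega) (measurable_LamQ k)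
    (measurable_Lam0LamQ k) (fun x hx => abs_LamQ_le_div_pow hx)
    (fun x hx => abs_Lam0LamQ_le_mul_pow hx.le) (fun x hx => abs_Lam0LamQ_le_div_pow hx) hl hm
  simp only [rescale] at hQQ hΛQ hQΛ
  linear_combination hQQ + hΛQ + hQΛ

end
end

section
/- Let k ≥ 4 be an integer. There is a constant C > 0 such that for all λ, μ > 0 with ν := λ/μ ≤ 1/2, writing ΛQ_σ(r) := ΛQ(r/σ), one has (∫₀^∞ r^{-2} ΛQ_λ(r)⁴ ΛQ_μ(r)² r dr)^{1/2} + (∫₀^∞ r^{-2} ΛQ_λ(r)² ΛQ_μ(r)⁴ r dr)^{1/2} ≤ C ν^{k}; that is, ‖r^{-1} (ΛQ_λ)² ΛQ_μ‖_{L²} + ‖r^{-1} ΛQ_λ (ΛQ_μ)²‖_{L²} ≤ C ν^k, with L² taken with respect to r dr. -/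
open MeasureTheory Set Filter

noncomputable section

/-!
Since `ΛQ(s) ≤ 2k min(s^k, s^{-k})`, the product `ΛQ_λ ΛQ_μ` is bounded pointwise by
`(2k)² ν^k`, so both integrands are at most `(2k)⁴ ν^{2k} ΛQ_σ(r)² / r` with `σ ∈ {λ, μ}`.
The measure `ΛQ_σ² dr/r` has total mass `2k` for every `σ`: as `ΛQ = k sin Q`, the function
`ΛQ_σ(r)² / r` has the primitive `-k (1 + cos Q(r/σ)) = -2k / (1 + (r/σ)^{2k})`.
-/

open Topology

namespace LamQ

variable {k : ℕ}

lemma one_add_pow_two_mul_pos (k : ℕ) (s : ℝ) : 0 < 1 + s ^ (2 * k) := by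
  rw [pow_mul]; positivity

lemma nonneg {s : ℝ} (hs : 0 ≤ s) : 0 ≤ LamQ k s :=
  div_nonneg (by positivity) (one_add_pow_two_mul_pos k s).le

lemma le_two_mul_pow {s : ℝ} (hs : 0 ≤ s) : LamQ k s ≤ 2 * k * s ^ k := by
  rw [LamQ, div_le_iff₀ (one_add_pow_two_mul_pos k s)]
  nlinarith [mul_nonneg (by positivity : (0 : ℝ) ≤ 2 * k * s ^ k) (pow_nonneg hs (2 * k))]

lemma le_two_mul_div_pow {s : ℝ} (hs : 0 < s) : LamQ k s ≤ 2 * k / s ^ k := by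
  rw [LamQ, div_le_div_iff₀ (one_add_pow_two_mul_pos k s) (pow_pos hs k), mul_comm 2, pow_mul']
  nlinarith [pow_pos hs k, (Nat.cast_nonneg k : (0 : ℝ) ≤ k)]

lemma mul_le_of_scales {lam mu r : ℝ} (hlam : 0 < lam) (hmu : 0 < mu) (hr : 0 < r) :
    LamQ k (r / lam) * LamQ k (r / mu) ≤ (2 * k) ^ 2 * (lam / mu) ^ k := by
  calc LamQ k (r / lam) * LamQ k (r / mu)
      ≤ 2 * k / (r / lam) ^ k * (2 * k * (r / mu) ^ k) := by
        gcongr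
        · exact nonneg (by positivity)
        · exact le_two_mul_div_pow (by positivity)
        · exact le_two_mul_pow (by positivity)
    _ = (2 * k) ^ 2 * (lam / mu) ^ k := by
        rw [div_pow, div_pow, div_pow]
        field_simp

lemma hasDerivAt_neg_two_mul_div_one_add_pow (hk : 0 < k) {s : ℝ} (hs : 0 < s) :
    HasDerivAt (fun s : ℝ => -(2 * k) / (1 + s ^ (2 * k))) (LamQ k s ^ 2 / s) s := by
  have hden := one_add_pow_two_mul_pos k s
  have hd := (((hasDerivAt_pow (2 * k) s).const_add 1).fun_inv hden.ne').const_mul (-(2 * k : ℝ))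
  simp only [← div_eq_mul_inv] at hd
  refine hd.congr_deriv ?_
  have hpow : s ^ (2 * k) = s ^ (2 * k - 1) * s := by
    rw [← pow_succ, Nat.sub_add_cancel (by omega)]
  have hsq : (s ^ k) ^ 2 = s ^ (2 * k - 1) * s := by rw [← pow_mul, mul_comm, hpow]
  unfold LamQ
  rw [div_pow, mul_pow, hsq, hpow]
  rw [hpow] at hden
  field_simp
  push_cast
  ring

lemma hasDerivAt_neg_two_mul_div_one_add_div_pow (hk : 0 < k) {σ r : ℝ} (hσ : 0 < σ)
    (hr : 0 < r) :
    HasDerivAt (fun r : ℝ => -(2 * k) / (1 + (r / σ) ^ (2 * k))) (LamQ k (r / σ) ^ 2 / r) r := by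
  have hd := (hasDerivAt_neg_two_mul_div_one_add_pow hk (div_pos hr hσ)).comp r
    ((hasDerivAt_id r).div_const σ)
  refine hd.congr_deriv ?_
  field_simp

lemma tendsto_neg_two_mul_div_one_add_div_pow (hk : 0 < k) {σ : ℝ} (hσ : 0 < σ) :
    Tendsto (fun r : ℝ => -(2 * k) / (1 + (r / σ) ^ (2 * k))) atTop (𝓝 0) := by
  have hpow : Tendsto (fun r : ℝ => (r / σ) ^ (2 * k)) atTop atTop :=
    (tendsto_pow_atTop (by omega)).comp (tendsto_id.atTop_div_const hσ)
  exact tendsto_const_nhds.div_atTop (tendsto_atTop_add_const_left _ 1 hpow)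

lemma continuous_neg_two_mul_div_one_add_div_pow (k : ℕ) (σ : ℝ) :
    Continuous (fun r : ℝ => -(2 * k) / (1 + (r / σ) ^ (2 * k))) :=
  continuous_const.div (by fun_prop) fun r => (one_add_pow_two_mul_pos k (r / σ)).ne'

lemma integrableOn_sq_comp_div_div (hk : 0 < k) {σ : ℝ} (hσ : 0 < σ) :
    IntegrableOn (fun r => LamQ k (r / σ) ^ 2 / r) (Ioi 0) :=
  integrableOn_Ioi_deriv_of_nonneg
    (continuous_neg_two_mul_div_one_add_div_pow k σ).continuousWithinAt
    (fun _ hr => hasDerivAt_neg_two_mul_div_one_add_div_pow hk hσ hr)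
    (fun _ hr => div_nonneg (sq_nonneg _) (le_of_lt hr))
    (tendsto_neg_two_mul_div_one_add_div_pow hk hσ)

lemma integral_sq_comp_div_div (hk : 0 < k) {σ : ℝ} (hσ : 0 < σ) :
    ∫ r in Ioi 0, LamQ k (r / σ) ^ 2 / r = 2 * k := by
  rw [integral_Ioi_of_hasDerivAt_of_nonneg
    (continuous_neg_two_mul_div_one_add_div_pow k σ).continuousWithinAt
    (fun _ hr => hasDerivAt_neg_two_mul_div_one_add_div_pow hk hσ hr)
    (fun _ hr => div_nonneg (sq_nonneg _) (le_of_lt hr))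
    (tendsto_neg_two_mul_div_one_add_div_pow hk hσ)]
  simp [zero_pow (show 2 * k ≠ 0 by omega)]

lemma integral_mul_sq_comp_div_div_le (hk : 0 < k) {σ M : ℝ} (hσ : 0 < σ) {w : ℝ → ℝ}
    (hw0 : ∀ r ∈ Ioi 0, 0 ≤ w r) (hwM : ∀ r ∈ Ioi 0, w r ≤ M) :
    ∫ r in Ioi 0, w r * LamQ k (r / σ) ^ 2 / r ≤ M * (2 * k) := by
  calc ∫ r in Ioi 0, w r * LamQ k (r / σ) ^ 2 / r
      ≤ ∫ r in Ioi 0, M * (LamQ k (r / σ) ^ 2 / r) := by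
        refine integral_mono_of_nonneg ?_ ((integrableOn_sq_comp_div_div hk hσ).const_mul M) ?_
        all_goals filter_upwards [ae_restrict_mem measurableSet_Ioi] with r hr
        · exact div_nonneg (mul_nonneg (hw0 r hr) (sq_nonneg _)) (le_of_lt hr)
        · rw [mul_div_assoc]
          exact mul_le_mul_of_nonneg_right (hwM r hr) (div_nonneg (sq_nonneg _) (le_of_lt hr))
    _ = M * (2 * k) := by rw [integral_const_mul, integral_sq_comp_div_div hk hσ]

lemma sqrt_integral_mul_sq_comp_div_div_le (hk : 0 < k) {σ M : ℝ} (hσ : 0 < σ) (hM : 0 ≤ M)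
    {w : ℝ → ℝ} (hw0 : ∀ r ∈ Ioi 0, 0 ≤ w r) (hwM : ∀ r ∈ Ioi 0, w r ≤ M ^ 2) :
    √(∫ r in Ioi 0, w r * LamQ k (r / σ) ^ 2 / r) ≤ M * √(2 * k) := by
  calc √(∫ r in Ioi 0, w r * LamQ k (r / σ) ^ 2 / r)
      ≤ √(M ^ 2 * (2 * k)) := Real.sqrt_le_sqrt (integral_mul_sq_comp_div_div_le hk hσ hw0 hwM)
    _ = M * √(2 * k) := by rw [Real.sqrt_mul (sq_nonneg M), Real.sqrt_sq hM]

end LamQ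

/-- `‖r⁻¹(ΛQ_λ)² ΛQ_μ‖_{L²} + ‖r⁻¹ ΛQ_λ (ΛQ_μ)²‖_{L²} ≤ C ν^k`,
with `ν = λ/μ ≤ 1/2` and the `L²` norm with respect to `r dr`. -/
theorem stmt4 (k : ℕ) (hk : 4 ≤ k) :
    ∃ C : ℝ, 0 < C ∧
      ∀ lam mu : ℝ, 0 < lam → 0 < mu → lam / mu ≤ 1 / 2 →
        Real.sqrt (∫ r in Ioi (0 : ℝ), LamQ k (r / lam) ^ 4 * LamQ k (r / mu) ^ 2 / r ^ 2 * r) +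
        Real.sqrt (∫ r in Ioi (0 : ℝ), LamQ k (r / lam) ^ 2 * LamQ k (r / mu) ^ 4 / r ^ 2 * r)
          ≤ C * (lam / mu) ^ k := by
  have hk0 : 0 < k := by omega
  refine ⟨2 * ((2 * k) ^ 2 * √(2 * k)), by positivity, fun lam mu hlam hmu _ => ?_⟩
  have bound : ∀ σ > 0, √(∫ r in Ioi 0,
      (LamQ k (r / lam) * LamQ k (r / mu)) ^ 2 * LamQ k (r / σ) ^ 2 / r)
        ≤ (2 * k) ^ 2 * (lam / mu) ^ k * √(2 * k) := fun σ hσ =>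
    LamQ.sqrt_integral_mul_sq_comp_div_div_le hk0 hσ (by positivity)
      (fun r _ => sq_nonneg _) fun r hr => pow_le_pow_left₀
        (mul_nonneg (LamQ.nonneg (div_pos hr hlam).le) (LamQ.nonneg (div_pos hr hmu).le))
        (LamQ.mul_le_of_scales hlam hmu hr) 2
  have hlam_eq : ∫ r in Ioi (0 : ℝ), LamQ k (r / lam) ^ 4 * LamQ k (r / mu) ^ 2 / r ^ 2 * r
      = ∫ r in Ioi 0, (LamQ k (r / lam) * LamQ k (r / mu)) ^ 2 * LamQ k (r / lam) ^ 2 / r :=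
    setIntegral_congr_fun measurableSet_Ioi fun r (hr : 0 < r) => by field_simp
  have hmu_eq : ∫ r in Ioi (0 : ℝ), LamQ k (r / lam) ^ 2 * LamQ k (r / mu) ^ 4 / r ^ 2 * r
      = ∫ r in Ioi 0, (LamQ k (r / lam) * LamQ k (r / mu)) ^ 2 * LamQ k (r / mu) ^ 2 / r :=
    setIntegral_congr_fun measurableSet_Ioi fun r (hr : 0 < r) => by field_simp
  rw [hlam_eq, hmu_eq]
  linarith [bound lam hlam, bound mu hmu]

end
end

section
/- There is an absolute constant C₀ > 0 with the following property. For every c > 0 and R > 0 there exists a function p : (0,∞) → ℝ which is five times continuously differentiable with locally Lipschitz fifth derivative, such that, writing Δg := g'' + g'/r for the radial Laplacian: (1) p(r) = r²/2 for r ≤ R; (2) there exists R̃ > R such that p is constant on [R̃, ∞); (3) |p'(r)| ≤ C₀ r and |p''(r)| ≤ C₀ for all r > 0; (4) p''(r) ≥ -c and p'(r)/r ≥ -c for all r > 0; (5) |r (Δp)'(r)| ≤ c for all r > 0; (6) Δ²p(r) ≤ c r^{-2} for all r > 0; (7) Δ³p(r) ≥ -c r^{-4} for all r > 0; (8) |r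 (p'(r)/r)'| ≤ c for all r > 0; (9) |r ( r (p'(r)/r)' )'| ≤ c for all r > 0. -/
/-!
Write `t = log r`. The Euler operator `r ∂ᵣ` becomes `∂ₜ`, and on `r ^ m H(log r)` the radial
Laplacian acts as `r ^ (m - 2) (∂ₜ + m)² H`. Take `p'(r) = r ψ(log r)`, where `ψ` equals `1` for
`t ≤ log R`, vanishes for large `t`, and makes its transition over so long a `t`-interval that
`|ψ⁽ᵏ⁾| ≤ ε` for `1 ≤ k ≤ 5`. Then `p = r²/2` on `(0, R]`, `p` is eventually constant,
`p'' = ψ + ψ'`, `p'/r = ψ`, `Δp = G(log r)` with `G = 2ψ + ψ'`, `Δ²p = r⁻² G''(log r)`,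
`Δ³p = r⁻⁴ (G⁽⁴⁾ - 4G⁽³⁾ + 4G'')(log r)`, and the two Euler-type quantities are `ψ'(log r)` and
`ψ''(log r)`. Since `|G⁽ᵏ⁾| ≤ 3ε`, every estimate holds once `27 ε ≤ c`.
-/

open MeasureTheory Set Filter

noncomputable section

/-- The two-dimensional radial Laplacian `Δg(r) = g''(r) + g'(r)/r`. -/
def radLap (g : ℝ → ℝ) : ℝ → ℝ := fun r => deriv (deriv g) r + deriv g r / r

open Real Topology
open scoped ContDiff

theorem Real.smoothTransition.exists_abs_iteratedDeriv_le (n : ℕ) :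
    ∃ M, ∀ k ≤ n, ∀ x, |iteratedDeriv k smoothTransition x| ≤ M := by
  have bound (k : ℕ) : ∃ M, ∀ x, |iteratedDeriv k smoothTransition x| ≤ M := by
    have hcont : Continuous (iteratedDeriv k smoothTransition) :=
      smoothTransition.contDiff.continuous_iteratedDeriv k (mod_cast le_top)
    obtain ⟨C, hC⟩ := (isCompact_Icc (a := 0) (b := 1)).exists_bound_of_continuousOn
      hcont.continuousOn
    refine ⟨max C 1, fun x => ?_⟩
    rcases lt_or_ge x 0 with hx | hx
    · have h : smoothTransition =ᶠ[𝓝 x] fun _ => 0 := Filter.mem_of_superset (Iio_mem_nhds hx)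
        fun y hy => smoothTransition.zero_of_nonpos (le_of_lt hy)
      simp [h.iteratedDeriv_eq]
    rcases le_or_gt x 1 with hx' | hx'
    · exact (hC x ⟨hx, hx'⟩).trans (le_max_left _ _)
    · have h : smoothTransition =ᶠ[𝓝 x] fun _ => 1 := Filter.mem_of_superset (Ioi_mem_nhds hx')
        fun y hy => smoothTransition.one_of_one_le (le_of_lt hy)
      rw [h.iteratedDeriv_eq, iteratedDeriv_const]
      split_ifs <;> simp
  choose M hM using bound
  refine ⟨∑ k ∈ Finset.range (n + 1), |M k|, fun k hk x => (hM k x).trans ?_⟩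
  exact (le_abs_self _).trans (Finset.single_le_sum (fun i _ => abs_nonneg (M i))
    (Finset.mem_range.2 (Nat.lt_succ_of_le hk)))

theorem exists_cutoff_abs_iteratedDeriv_le (a : ℝ) (n : ℕ) {ε : ℝ} (hε : 0 < ε) :
    ∃ ψ : ℝ → ℝ, ∃ b, ContDiff ℝ ∞ ψ ∧ (∀ t ≤ a, ψ t = 1) ∧ (∀ t, b ≤ t → ψ t = 0) ∧
      (∀ t, ψ t ∈ Icc 0 1) ∧ ∀ k, 1 ≤ k → k ≤ n → ∀ t, |iteratedDeriv k ψ t| ≤ ε := by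
  obtain ⟨M, hM⟩ := smoothTransition.exists_abs_iteratedDeriv_le n
  set L := max 1 (M / ε)
  have hL : 0 < L := lt_max_of_lt_left one_pos
  refine ⟨fun t => 1 - smoothTransition (L⁻¹ * t - L⁻¹ * a), a + L, by fun_prop, fun t ht => ?_,
    fun t ht => ?_, fun t => ⟨?_, ?_⟩, fun k hk hkn t => ?_⟩
  · have : L⁻¹ * t - L⁻¹ * a ≤ 0 := by
      rw [← mul_sub]; exact mul_nonpos_of_nonneg_of_nonpos (by positivity) (by linarith)
    simp [smoothTransition.zero_of_nonpos this]
  · have : 1 ≤ L⁻¹ * t - L⁻¹ * a := by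
      rw [← mul_sub, inv_mul_eq_div, le_div_iff₀ hL]; linarith
    simp [smoothTransition.one_of_one_le this]
  · exact sub_nonneg.2 (smoothTransition.le_one _)
  · linarith [smoothTransition.nonneg (L⁻¹ * t - L⁻¹ * a)]
  · have hderiv : iteratedDeriv k (fun t => 1 - smoothTransition (L⁻¹ * t - L⁻¹ * a)) t =
        -(L⁻¹ ^ k * iteratedDeriv k smoothTransition (L⁻¹ * t - L⁻¹ * a)) := by
      rw [iteratedDeriv_const_sub hk, iteratedDeriv_neg,
        iteratedDeriv_comp_const_mul (f := fun u => smoothTransition (u - L⁻¹ * a)) (by fun_prop),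
        iteratedDeriv_comp_sub_const]
    have hM0 : 0 ≤ M := (abs_nonneg _).trans (hM 0 (Nat.zero_le n) 0)
    calc |iteratedDeriv k (fun t => 1 - smoothTransition (L⁻¹ * t - L⁻¹ * a)) t|
        ≤ L⁻¹ ^ k * M := by
          rw [hderiv, abs_neg, abs_mul, abs_of_pos (by positivity)]
          gcongr; exact hM k hkn _
      _ ≤ L⁻¹ * M := by
          gcongr
          exact pow_le_of_le_one (by positivity) (inv_le_one_of_one_le₀ (le_max_left _ _))
            (by omega)
      _ ≤ ε := by
          rw [inv_mul_le_iff₀ hL, ← div_le_iff₀ hε]; exact le_max_right _ _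

theorem ContDiffOn.exists_lipschitzOnWith_iteratedDeriv {𝕂 F : Type*} [RCLike 𝕂]
    [NormedAddCommGroup F] [NormedSpace 𝕂 F] {f : 𝕂 → F} {U : Set 𝕂} (hf : ContDiffOn 𝕂 ∞ f U)
    (hU : IsOpen U) (n : ℕ) {x : 𝕂} (hx : x ∈ U) :
    ∃ K, ∃ t ∈ 𝓝[U] x, LipschitzOnWith K (iteratedDeriv n f) t := by
  have hn : ContDiffOn 𝕂 ∞ (iteratedDeriv n f) U := by
    rw [iteratedDeriv_eq_iterate]
    induction n with
    | zero => exact hf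
    | succ n ih =>
      rw [Function.iterate_succ_apply']
      exact ih.deriv_of_isOpen hU le_rfl
  obtain ⟨K, t, ht, hK⟩ :=
    ((hn.contDiffAt (hU.mem_nhds hx)).of_le (mod_cast le_top)).exists_lipschitzOnWith
  exact ⟨K, t, mem_nhdsWithin_of_mem_nhds ht, hK⟩

theorem radLap_congr {f g : ℝ → ℝ} {r : ℝ} (h : f =ᶠ[𝓝 r] g) : radLap f r = radLap g r := by
  simp only [radLap, h.deriv.deriv_eq, h.deriv_eq]

theorem radLap_eq_of_hasDerivAt {f f' : ℝ → ℝ} {f'' r : ℝ}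
    (hf : ∀ᶠ s in 𝓝 r, HasDerivAt f (f' s) s) (hf' : HasDerivAt f' f'' r) :
    radLap f r = f'' + f' r / r := by
  have h : deriv f =ᶠ[𝓝 r] f' := hf.mono fun s hs => hs.deriv
  simp only [radLap, h.deriv_eq, hf'.deriv, h.eq_of_nhds]

theorem hasDerivAt_iteratedDeriv_comp_log {G : ℝ → ℝ} (hG : ContDiff ℝ ∞ G) (k : ℕ) {r : ℝ}
    (hr : r ≠ 0) :
    HasDerivAt (fun s => iteratedDeriv k G (log s)) (iteratedDeriv (k + 1) G (log r) / r) r := by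
  have h := ((hG.differentiable_iteratedDeriv k (mod_cast WithTop.coe_lt_top _)).differentiableAt
    (x := log r)).hasDerivAt
  rw [← iteratedDeriv_succ] at h
  rw [div_eq_mul_inv]
  exact h.comp r (hasDerivAt_log hr)

theorem mul_deriv_eq_of_eventuallyEq_comp_log {f G : ℝ → ℝ} {r : ℝ}
    (hf : f =ᶠ[𝓝 r] fun s => G (log s)) (hG : DifferentiableAt ℝ G (log r)) (hr : r ≠ 0) :
    r * deriv f r = deriv G (log r) := by
  have h : HasDerivAt (fun s => G (log s)) (deriv G (log r) * r⁻¹) r :=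
    hG.hasDerivAt.comp r (hasDerivAt_log hr)
  rw [hf.deriv_eq, h.deriv]
  field_simp

theorem hasDerivAt_zpow_mul_iteratedDeriv_comp_log {G : ℝ → ℝ} (hG : ContDiff ℝ ∞ G) (m : ℤ)
    (k : ℕ) {r : ℝ} (hr : r ≠ 0) :
    HasDerivAt (fun s => s ^ m * iteratedDeriv k G (log s))
      (r ^ (m - 1) * (m * iteratedDeriv k G (log r) + iteratedDeriv (k + 1) G (log r))) r := by
  refine ((hasDerivAt_zpow m r (.inl hr)).mul
    (hasDerivAt_iteratedDeriv_comp_log hG k hr)).congr_deriv ?_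
  rw [zpow_sub_one₀ hr]
  field_simp

theorem radLap_zpow_mul_iteratedDeriv_comp_log {G : ℝ → ℝ} (hG : ContDiff ℝ ∞ G) (m : ℤ)
    (k : ℕ) {r : ℝ} (hr : r ≠ 0) :
    radLap (fun s => s ^ m * iteratedDeriv k G (log s)) r =
      r ^ (m - 2) * (iteratedDeriv (k + 2) G (log r) + 2 * m * iteratedDeriv (k + 1) G (log r)
        + m ^ 2 * iteratedDeriv k G (log r)) := by
  have hf' := ((hasDerivAt_zpow_mul_iteratedDeriv_comp_log hG (m - 1) k hr).const_mul (m : ℝ)).add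
    (hasDerivAt_zpow_mul_iteratedDeriv_comp_log hG (m - 1) (k + 1) hr)
  rw [radLap_eq_of_hasDerivAt ?_ hf']
  · simp only [Pi.add_apply]
    push_cast
    rw [sub_sub, show (1 : ℤ) + 1 = 2 by norm_num, zpow_sub₀ hr, zpow_sub₀ hr, zpow_one]
    field_simp
    ring
  · filter_upwards [eventually_ne_nhds hr] with s hs
    exact (hasDerivAt_zpow_mul_iteratedDeriv_comp_log hG m k hs).congr_deriv
      (by simp only [Pi.add_apply]; ring)

def radialProfile (ψ : ℝ → ℝ) (r : ℝ) : ℝ := ∫ s in (0 : ℝ)..r, s * ψ (log s)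

section RadialProfile

variable {ψ : ℝ → ℝ}

theorem continuous_mul_comp_log (hψ : Continuous ψ) (hbdd : ∃ C, ∀ t, |ψ t| ≤ C) :
    Continuous fun s => s * ψ (log s) := by
  obtain ⟨C, hC⟩ := hbdd
  refine continuous_iff_continuousAt.2 fun x => ?_
  rcases eq_or_ne x 0 with rfl | hx
  · have hlim : Tendsto (fun s : ℝ => C * |s|) (𝓝 0) (𝓝 0) := by
      simpa using (continuous_abs.tendsto (0 : ℝ)).const_mul C
    rw [ContinuousAt, zero_mul]
    refine squeeze_zero_norm (fun s => ?_) hlim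
    rw [Real.norm_eq_abs, abs_mul, mul_comm]
    exact mul_le_mul_of_nonneg_right (hC _) (abs_nonneg s)
  · exact continuousAt_id.mul (hψ.continuousAt.comp (continuousAt_log hx))

theorem deriv_radialProfile (hψ : Continuous ψ) (hbdd : ∃ C, ∀ t, |ψ t| ≤ C) :
    deriv (radialProfile ψ) = fun r => r * ψ (log r) :=
  funext fun r =>
    ((continuous_mul_comp_log hψ hbdd).integral_hasStrictDerivAt 0 r).hasDerivAt.deriv

theorem radialProfile_eq_sq_div_two {a r : ℝ} (hψa : ∀ t ≤ a, ψ t = 1) (hr₀ : 0 ≤ r)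
    (hr : r ≤ exp a) : radialProfile ψ r = r ^ 2 / 2 := by
  have h : EqOn (fun s => s * ψ (log s)) id (uIcc 0 r) := by
    intro s hs
    rw [uIcc_of_le hr₀] at hs
    rcases hs.1.eq_or_lt with rfl | hs₀
    · simp
    · simp [hψa _ ((log_le_log hs₀ hs.2).trans ((log_le_iff_le_exp (hs₀.trans_le hs.2)).2 hr))]
  rw [radialProfile, intervalIntegral.integral_congr h]
  simp

theorem radialProfile_eq_of_le {b r : ℝ} (hψ : Continuous ψ) (hbdd : ∃ C, ∀ t, |ψ t| ≤ C)
    (hψb : ∀ t, b ≤ t → ψ t = 0) (hr : exp b ≤ r) :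
    radialProfile ψ r = radialProfile ψ (exp b) := by
  have hq := continuous_mul_comp_log hψ hbdd
  have h : EqOn (fun s => s * ψ (log s)) 0 (uIcc (exp b) r) := by
    intro s hs
    rw [uIcc_of_le hr] at hs
    simp [hψb _ ((le_log_iff_exp_le ((exp_pos b).trans_le hs.1)).2 hs.1)]
  rw [radialProfile, radialProfile, ← intervalIntegral.integral_add_adjacent_intervals
    (hq.intervalIntegrable 0 (exp b)) (hq.intervalIntegrable (exp b) r),
    intervalIntegral.integral_congr h]
  simp

theorem contDiffOn_radialProfile (hψ : ContDiff ℝ ∞ ψ) (hbdd : ∃ C, ∀ t, |ψ t| ≤ C) :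
    ContDiffOn ℝ ∞ (radialProfile ψ) (Ioi 0) := by
  refine (contDiffOn_infty_iff_deriv_of_isOpen isOpen_Ioi).2 ⟨?_, ?_⟩
  · exact fun r _ => ((continuous_mul_comp_log hψ.continuous hbdd).integral_hasStrictDerivAt 0
      r).hasDerivAt.differentiableAt.differentiableWithinAt
  · rw [deriv_radialProfile hψ.continuous hbdd]
    exact contDiffOn_id.mul (hψ.comp_contDiffOn (contDiffOn_log.mono fun x hx => ne_of_gt hx))

theorem deriv_deriv_radialProfile (hψ : ContDiff ℝ ∞ ψ) (hbdd : ∃ C, ∀ t, |ψ t| ≤ C) {r : ℝ}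
    (hr : r ≠ 0) : deriv (deriv (radialProfile ψ)) r = ψ (log r) + deriv ψ (log r) := by
  simpa [deriv_radialProfile hψ.continuous hbdd] using
    (hasDerivAt_zpow_mul_iteratedDeriv_comp_log hψ 1 0 hr).deriv

theorem radLap_radialProfile (hψ : ContDiff ℝ ∞ ψ) (hbdd : ∃ C, ∀ t, |ψ t| ≤ C) {r : ℝ}
    (hr : r ≠ 0) : radLap (radialProfile ψ) r = 2 * ψ (log r) + deriv ψ (log r) := by
  rw [radLap, deriv_deriv_radialProfile hψ hbdd hr, deriv_radialProfile hψ.continuous hbdd]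
  field_simp
  ring

theorem radLap_radLap_radialProfile (hψ : ContDiff ℝ ∞ ψ) (hbdd : ∃ C, ∀ t, |ψ t| ≤ C) {r : ℝ}
    (hr : r ≠ 0) : radLap (radLap (radialProfile ψ)) r =
      iteratedDeriv 2 (fun t => 2 * ψ t + deriv ψ t) (log r) / r ^ 2 := by
  set G : ℝ → ℝ := fun t => 2 * ψ t + deriv ψ t
  have hG : ContDiff ℝ ∞ G := by fun_prop
  rw [radLap_congr (g := fun s => s ^ (0 : ℤ) * iteratedDeriv 0 G (log s)) ?_,
    radLap_zpow_mul_iteratedDeriv_comp_log hG 0 0 hr]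
  · simp [zpow_neg, div_eq_mul_inv, mul_comm]
  · filter_upwards [eventually_ne_nhds hr] with s hs
    simp [G, radLap_radialProfile hψ hbdd hs]

theorem radLap_radLap_radLap_radialProfile (hψ : ContDiff ℝ ∞ ψ) (hbdd : ∃ C, ∀ t, |ψ t| ≤ C)
    {r : ℝ} (hr : r ≠ 0) : radLap (radLap (radLap (radialProfile ψ))) r =
      (iteratedDeriv 4 (fun t => 2 * ψ t + deriv ψ t) (log r)
        - 4 * iteratedDeriv 3 (fun t => 2 * ψ t + deriv ψ t) (log r)
        + 4 * iteratedDeriv 2 (fun t => 2 * ψ t + deriv ψ t) (log r)) / r ^ 4 := by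
  set G : ℝ → ℝ := fun t => 2 * ψ t + deriv ψ t
  have hG : ContDiff ℝ ∞ G := by fun_prop
  rw [radLap_congr (g := fun s => s ^ (-2 : ℤ) * iteratedDeriv 2 G (log s)) ?_,
    radLap_zpow_mul_iteratedDeriv_comp_log hG (-2) 2 hr]
  · norm_num [zpow_neg, div_eq_mul_inv]
    ring
  · filter_upwards [eventually_ne_nhds hr] with s hs
    simp [G, radLap_radLap_radialProfile hψ hbdd hs, zpow_neg, div_eq_mul_inv, mul_comm]

theorem mul_deriv_radLap_radialProfile (hψ : ContDiff ℝ ∞ ψ) (hbdd : ∃ C, ∀ t, |ψ t| ≤ C)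
    {r : ℝ} (hr : r ≠ 0) :
    r * deriv (radLap (radialProfile ψ)) r = deriv (fun t => 2 * ψ t + deriv ψ t) (log r) := by
  have hG : ContDiff ℝ ∞ fun t => 2 * ψ t + deriv ψ t := by fun_prop
  refine mul_deriv_eq_of_eventuallyEq_comp_log ?_ (hG.differentiable (by simp)).differentiableAt hr
  filter_upwards [eventually_ne_nhds hr] with s hs
  exact radLap_radialProfile hψ hbdd hs

theorem deriv_radialProfile_div_eventuallyEq (hψ : Continuous ψ) (hbdd : ∃ C, ∀ t, |ψ t| ≤ C)
    {r : ℝ} (hr : r ≠ 0) :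
    (fun s => deriv (radialProfile ψ) s / s) =ᶠ[𝓝 r] fun s => ψ (log s) := by
  filter_upwards [eventually_ne_nhds hr] with s hs
  rw [deriv_radialProfile hψ hbdd, mul_div_cancel_left₀ _ hs]

theorem mul_deriv_deriv_radialProfile_div (hψ : ContDiff ℝ ∞ ψ) (hbdd : ∃ C, ∀ t, |ψ t| ≤ C)
    {r : ℝ} (hr : r ≠ 0) :
    r * deriv (fun s => deriv (radialProfile ψ) s / s) r = deriv ψ (log r) :=
  mul_deriv_eq_of_eventuallyEq_comp_log (deriv_radialProfile_div_eventuallyEq hψ.continuous hbdd hr)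
    (hψ.differentiable (by simp)).differentiableAt hr

theorem mul_deriv_mul_deriv_deriv_radialProfile_div (hψ : ContDiff ℝ ∞ ψ)
    (hbdd : ∃ C, ∀ t, |ψ t| ≤ C) {r : ℝ} (hr : r ≠ 0) :
    r * deriv (fun s => s * deriv (fun u => deriv (radialProfile ψ) u / u) s) r =
      deriv (deriv ψ) (log r) := by
  have hψ' : ContDiff ℝ ∞ (deriv ψ) := by fun_prop
  refine mul_deriv_eq_of_eventuallyEq_comp_log ?_ (hψ'.differentiable (by simp)).differentiableAt hr
  filter_upwards [eventually_ne_nhds hr] with s hs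
  exact mul_deriv_deriv_radialProfile_div hψ hbdd hs

theorem abs_iteratedDeriv_two_mul_add_deriv_le (hψ : ContDiff ℝ ∞ ψ) {ε : ℝ} {k : ℕ}
    (hk : ∀ t, |iteratedDeriv k ψ t| ≤ ε) (hk' : ∀ t, |iteratedDeriv (k + 1) ψ t| ≤ ε) (t : ℝ) :
    |iteratedDeriv k (fun t => 2 * ψ t + deriv ψ t) t| ≤ 3 * ε := by
  have hψk : ContDiff ℝ k ψ := hψ.of_le (mod_cast le_top)
  have hψk' : ContDiff ℝ k (deriv ψ) :=
    (show ContDiff ℝ ∞ (deriv ψ) by fun_prop).of_le (mod_cast le_top)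
  rw [iteratedDeriv_fun_add (by fun_prop) (by fun_prop), iteratedDeriv_const_mul_field,
    ← iteratedDeriv_succ']
  calc _ ≤ |2 * iteratedDeriv k ψ t| + |iteratedDeriv (k + 1) ψ t| := abs_add_le _ _
    _ ≤ 2 * ε + ε := by rw [abs_mul, abs_two]; gcongr <;> apply_assumption
    _ = 3 * ε := by ring

theorem radialProfile_gradient_hessian_bounds {ε c : ℝ} (hψ : ContDiff ℝ ∞ ψ)
    (hψ01 : ∀ t, ψ t ∈ Icc 0 1) (hψ1 : ∀ t, |deriv ψ t| ≤ ε) (hε1 : ε ≤ 1) (hεc : ε ≤ c) :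
    (∀ r ∈ Ioi (0 : ℝ), |deriv (radialProfile ψ) r| ≤ 2 * r ∧
      |deriv (deriv (radialProfile ψ)) r| ≤ 2) ∧
    (∀ r ∈ Ioi (0 : ℝ), -c ≤ deriv (deriv (radialProfile ψ)) r ∧
      -c ≤ deriv (radialProfile ψ) r / r) := by
  have hbdd : ∃ C, ∀ t, |ψ t| ≤ C := ⟨1, fun t => abs_le.2 ⟨by linarith [(hψ01 t).1], (hψ01 t).2⟩⟩
  constructor
  all_goals
    intro r (hr : 0 < r)
    obtain ⟨h0, h1⟩ := hψ01 (log r)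
    have hd := abs_le.1 (hψ1 (log r))
    rw [deriv_deriv_radialProfile hψ hbdd hr.ne', deriv_radialProfile hψ.continuous hbdd]
  · rw [abs_mul, abs_of_pos hr, abs_of_nonneg h0, abs_le]
    exact ⟨by nlinarith, by constructor <;> linarith⟩
  · rw [mul_div_cancel_left₀ _ hr.ne']
    constructor <;> linarith

theorem radialProfile_higher_order_bounds {ε c : ℝ} (hψ : ContDiff ℝ ∞ ψ)
    (hbdd : ∃ C, ∀ t, |ψ t| ≤ C) (hψε : ∀ k, 1 ≤ k → k ≤ 5 → ∀ t, |iteratedDeriv k ψ t| ≤ ε)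
    (hεc : 27 * ε ≤ c) :
    (∀ r ∈ Ioi (0 : ℝ), |r * deriv (radLap (radialProfile ψ)) r| ≤ c) ∧
    (∀ r ∈ Ioi (0 : ℝ), radLap (radLap (radialProfile ψ)) r ≤ c / r ^ 2) ∧
    (∀ r ∈ Ioi (0 : ℝ), -(c / r ^ 4) ≤ radLap (radLap (radLap (radialProfile ψ))) r) ∧
    (∀ r ∈ Ioi (0 : ℝ), |r * deriv (fun s => deriv (radialProfile ψ) s / s) r| ≤ c) ∧
    (∀ r ∈ Ioi (0 : ℝ),
      |r * deriv (fun s => s * deriv (fun u => deriv (radialProfile ψ) u / u) s) r| ≤ c) := by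
  have hε : 0 ≤ ε := (abs_nonneg _).trans (hψε 1 le_rfl (by norm_num) 0)
  have hG (k : ℕ) (hk : 1 ≤ k) (hk4 : k ≤ 4) (t : ℝ) := abs_iteratedDeriv_two_mul_add_deriv_le hψ
    (hψε k hk (by omega)) (hψε (k + 1) (by omega) (by omega)) t
  refine ⟨fun r (hr : 0 < r) => ?_, fun r (hr : 0 < r) => ?_, fun r (hr : 0 < r) => ?_,
    fun r (hr : 0 < r) => ?_, fun r (hr : 0 < r) => ?_⟩
  · rw [mul_deriv_radLap_radialProfile hψ hbdd hr.ne', ← iteratedDeriv_one]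
    linarith [hG 1 le_rfl (by norm_num) (log r)]
  · rw [radLap_radLap_radialProfile hψ hbdd hr.ne']
    gcongr
    linarith [abs_le.1 (hG 2 (by norm_num) (by norm_num) (log r))]
  · rw [radLap_radLap_radLap_radialProfile hψ hbdd hr.ne', ← neg_div]
    gcongr
    linarith [abs_le.1 (hG 2 (by norm_num) (by norm_num) (log r)),
      abs_le.1 (hG 3 (by norm_num) (by norm_num) (log r)),
      abs_le.1 (hG 4 (by norm_num) (by norm_num) (log r))]
  · rw [mul_deriv_deriv_radialProfile_div hψ hbdd hr.ne', ← iteratedDeriv_one]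
    linarith [hψε 1 le_rfl (by norm_num) (log r)]
  · rw [mul_deriv_mul_deriv_deriv_radialProfile_div hψ hbdd hr.ne']
    linarith [show |deriv (deriv ψ) (log r)| ≤ ε by
      simpa [iteratedDeriv_succ] using hψε 2 (by norm_num) (by norm_num) (log r)]

end RadialProfile

/-- existence of the cut-off function `p = p_{c,R}` of Lemma 4.6
(`C^{5,1}` regularity, equal to `r²/2` near the origin, eventually constant,
with all the listed pointwise bounds). -/
theorem stmt8 :
    ∃ C₀ : ℝ, 0 < C₀ ∧
      ∀ c R : ℝ, 0 < c → 0 < R →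
        ∃ p : ℝ → ℝ,
          ContDiffOn ℝ 5 p (Ioi 0) ∧
          (∀ x ∈ Ioi (0 : ℝ), ∃ K : NNReal, ∃ t ∈ nhdsWithin x (Ioi 0),
            LipschitzOnWith K (iteratedDeriv 5 p) t) ∧
          (∀ r ∈ Ioc (0 : ℝ) R, p r = r ^ 2 / 2) ∧
          (∃ Rt : ℝ, R < Rt ∧ ∀ r ∈ Ici Rt, p r = p Rt) ∧
          (∀ r ∈ Ioi (0 : ℝ), |deriv p r| ≤ C₀ * r ∧ |deriv (deriv p) r| ≤ C₀) ∧
          (∀ r ∈ Ioi (0 : ℝ), -c ≤ deriv (deriv p) r ∧ -c ≤ deriv p r / r) ∧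
          (∀ r ∈ Ioi (0 : ℝ), |r * deriv (radLap p) r| ≤ c) ∧
          (∀ r ∈ Ioi (0 : ℝ), radLap (radLap p) r ≤ c / r ^ 2) ∧
          (∀ r ∈ Ioi (0 : ℝ), -(c / r ^ 4) ≤ radLap (radLap (radLap p)) r) ∧
          (∀ r ∈ Ioi (0 : ℝ), |r * deriv (fun s => deriv p s / s) r| ≤ c) ∧
          (∀ r ∈ Ioi (0 : ℝ),
            |r * deriv (fun s => s * deriv (fun u => deriv p u / u) s) r| ≤ c) := by
  refine ⟨2, two_pos, fun c R hc hR => ?_⟩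
  have hε : 0 < min (c / 27) 1 := lt_min (by positivity) one_pos
  have hεc : 27 * min (c / 27) 1 ≤ c := by linarith [min_le_left (c / 27) 1]
  obtain ⟨ψ, b, hψ, hψa, hψb, hψ01, hψε⟩ := exists_cutoff_abs_iteratedDeriv_le (log R) 5 hε
  have hbdd : ∃ C, ∀ t, |ψ t| ≤ C := ⟨1, fun t => abs_le.2 ⟨by linarith [(hψ01 t).1], (hψ01 t).2⟩⟩
  have hab : log R < b := by
    by_contra! h
    simpa [hψa (log R) le_rfl] using hψb (log R) h
  have hp := contDiffOn_radialProfile hψ hbdd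
  have hlow := radialProfile_gradient_hessian_bounds (c := c) hψ hψ01
    (fun t => by simpa using hψε 1 le_rfl (by norm_num) t) (min_le_right _ _) (by linarith)
  exact ⟨radialProfile ψ, hp.of_le (WithTop.coe_le_coe.2 le_top),
    fun x hx => hp.exists_lipschitzOnWith_iteratedDeriv isOpen_Ioi 5 hx,
    fun r hr => radialProfile_eq_sq_div_two hψa hr.1.le (by rw [exp_log hR]; exact hr.2),
    ⟨exp b, by simpa [exp_log hR] using exp_lt_exp.2 hab,
      fun r hr => radialProfile_eq_of_le hψ.continuous hbdd hψb hr⟩,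
    hlow.1, hlow.2,
    radialProfile_higher_order_bounds hψ hbdd hψε hεc⟩

end
end

section
/- Let k ≥ 2 be an integer and ΛQ(r) := 2k r^k/(1 + r^{2k}). Then: ∫₀^∞ ΛQ(r)² r dr = 2π / sin(π/k); ∫₀^∞ ΛQ(r)³ r^{k-1} dr = 2k²; and ∫₀^∞ ΛQ(r)³ r^{-k-1} dr = 2k². In particular, with ρ_k := ((8k/π) sin(π/k))^{1/2} and γ_k := (k/2) ρ_k², one has ρ_k² = 16k (∫₀^∞ ΛQ² r dr)^{-1} and the solvability (orthogonality) identities γ_k ∫₀^∞ ΛQ(r)² r dr = 4 ∫₀^∞ ΛQ(r)³ r^{k-1} dr = 4 ∫₀^∞ ΛQ(r)³ r^{-k-1} dr = 8k². -/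
open MeasureTheory Set

noncomputable section

/-- `ρ_k = ((8k/π) sin(π/k))^{1/2}`. -/
def rhoK (k : ℕ) : ℝ := Real.sqrt (8 * k / Real.pi * Real.sin (Real.pi / k))

/-- `γ_k = (k/2) ρ_k²`. -/
def gammaK (k : ℕ) : ℝ := (k : ℝ) / 2 * rhoK k ^ 2

/-!
The substitution `u = r^{2k}` turns each of the three integrals into a Beta integral of the
second kind, `∫₀^∞ u^{s-1} (1+u)^{-(s+t)} du = Γ(s)Γ(t)/Γ(s+t)`, with `(s, t)` equal to
`(1 + 1/k, 1 - 1/k)`, `(2, 1)` and `(1, 2)` respectively. Euler's reflection formula evaluates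
the first one to `(π/k) / sin(π/k)`; the other two are `1/2`. The identities for `ρ_k` and `γ_k`
are then arithmetic.
-/

open Real

theorem integral_Ioo_rpow_mul_one_sub_rpow {s t : ℝ} (hs : 0 < s) (ht : 0 < t) :
    ∫ x in Ioo (0 : ℝ) 1, x ^ (s - 1) * (1 - x) ^ (t - 1) =
      Gamma s * Gamma t / Gamma (s + t) := by
  apply Complex.ofReal_injective
  have hbeta := Complex.betaIntegral_eq_Gamma_mul_div s t (by simpa) (by simpa)
  rw [Complex.betaIntegral, intervalIntegral.integral_of_le zero_le_one,
    integral_Ioc_eq_integral_Ioo, ← Complex.ofReal_add, Complex.Gamma_ofReal,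
    Complex.Gamma_ofReal, Complex.Gamma_ofReal] at hbeta
  rw [← integral_complex_ofReal]
  push_cast
  rw [← hbeta]
  refine setIntegral_congr_fun measurableSet_Ioo fun x hx => ?_
  rw [Complex.ofReal_cpow hx.1.le, Complex.ofReal_cpow (sub_nonneg.2 hx.2.le)]
  push_cast
  rfl

theorem image_div_one_sub_Ioo : (fun x : ℝ => x / (1 - x)) '' Ioo 0 1 = Ioi 0 := by
  ext u
  refine ⟨fun ⟨x, ⟨hx0, hx1⟩, hxu⟩ => hxu ▸ div_pos hx0 (sub_pos.2 hx1), fun hu => ?_⟩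
  have hu1 : 0 < 1 + u := by linarith [mem_Ioi.1 hu]
  refine ⟨u / (1 + u), ⟨div_pos hu hu1, (div_lt_one hu1).2 (by linarith)⟩, ?_⟩
  field_simp
  ring

theorem integral_Ioi_rpow_div_one_add_rpow {s t : ℝ} (hs : 0 < s) (ht : 0 < t) :
    ∫ u in Ioi (0 : ℝ), u ^ (s - 1) / (1 + u) ^ (s + t) =
      Gamma s * Gamma t / Gamma (s + t) := by
  have hderiv : ∀ x ∈ Ioo (0 : ℝ) 1,
      HasDerivWithinAt (fun x => x / (1 - x)) (((1 - x) ^ 2)⁻¹) (Ioo 0 1) x := by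
    intro x hx
    have h1 : 1 - x ≠ 0 := (sub_pos.2 hx.2).ne'
    refine (((hasDerivAt_id x).div ((hasDerivAt_id x).const_sub 1) h1).congr_deriv ?_)
      |>.hasDerivWithinAt
    simp only [id_eq]
    field_simp
    ring
  have hinj : InjOn (fun x : ℝ => x / (1 - x)) (Ioo 0 1) := by
    intro x hx y hy hxy
    have := (div_eq_div_iff (sub_pos.2 hx.2).ne' (sub_pos.2 hy.2).ne').1 hxy
    linarith
  rw [← image_div_one_sub_Ioo,
    integral_image_eq_integral_abs_deriv_smul measurableSet_Ioo hderiv hinj,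
    ← integral_Ioo_rpow_mul_one_sub_rpow hs ht]
  refine setIntegral_congr_fun measurableSet_Ioo fun x ⟨hx0, hx1⟩ => ?_
  have h1 : 0 < 1 - x := sub_pos.2 hx1
  have hfx : 1 + x / (1 - x) = (1 - x)⁻¹ := by field_simp; ring
  rw [smul_eq_mul, hfx, abs_of_pos (by positivity), div_rpow hx0.le h1.le, inv_rpow h1.le,
    rpow_sub_one h1.ne', rpow_sub_one h1.ne', rpow_add h1]
  field_simp

theorem integral_Ioi_rpow_div_one_add_sq {a : ℝ} (ha0 : 0 < a) (ha1 : a < 1) :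
    ∫ u in Ioi (0 : ℝ), u ^ a / (1 + u) ^ 2 = a * (π / sin (π * a)) := by
  have h := integral_Ioi_rpow_div_one_add_rpow (s := 1 + a) (t := 1 - a)
    (by linarith) (by linarith)
  simp only [show 1 + a + (1 - a) = (2 : ℕ) by norm_num, rpow_natCast,
    add_sub_cancel_left] at h
  rw [h, add_comm, Gamma_add_one ha0.ne', mul_assoc, Gamma_mul_Gamma_one_sub]
  norm_num

theorem integral_Ioi_div_one_add_pow_three :
    ∫ u in Ioi (0 : ℝ), u / (1 + u) ^ 3 = 1 / 2 := by
  have h := integral_Ioi_rpow_div_one_add_rpow (s := 2) (t := 1) two_pos one_pos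
  norm_num [show (2 : ℝ) + 1 = (3 : ℕ) by norm_num, rpow_natCast, Gamma_two, Gamma_one] at h
  exact h

theorem integral_Ioi_inv_one_add_pow_three :
    ∫ u in Ioi (0 : ℝ), ((1 + u) ^ 3)⁻¹ = 1 / 2 := by
  have h := integral_Ioi_rpow_div_one_add_rpow (s := 1) (t := 2) one_pos two_pos
  norm_num [show (1 : ℝ) + 2 = (3 : ℕ) by norm_num, rpow_natCast, Gamma_two, Gamma_one] at h
  exact h

theorem integral_Ioi_pow_mul_comp_pow {E : Type*} [NormedAddCommGroup E]
    [NormedSpace ℝ E] {n : ℕ} (hn : 0 < n) (g : ℝ → E) :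
    ∫ r in Ioi (0 : ℝ), ((n : ℝ) * r ^ (n - 1)) • g (r ^ n) =
      ∫ u in Ioi (0 : ℝ), g u := by
  refine Eq.trans ?_ (integral_comp_rpow_Ioi_of_pos (g := g) (Nat.cast_pos.2 hn))
  refine setIntegral_congr_fun measurableSet_Ioi fun r _ => ?_
  rw [rpow_natCast, ← Nat.cast_pred hn, rpow_natCast]

namespace LamQ

variable {k : ℕ}

theorem integral_sq_mul_self (hk : 2 ≤ k) :
    ∫ r in Ioi (0 : ℝ), LamQ k r ^ 2 * r = 2 * π / sin (π / k) := by
  have hk1 : (1 : ℝ) < k := by exact_mod_cast hk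
  have hsub : ∀ r ∈ Ioi (0 : ℝ), LamQ k r ^ 2 * r =
      (((2 * k : ℕ) : ℝ) * r ^ (2 * k - 1)) •
        (2 * k * ((r ^ (2 * k)) ^ (k : ℝ)⁻¹ / (1 + r ^ (2 * k)) ^ 2)) := by
    intro r (hr : 0 < r)
    rw [pow_mul, pow_rpow_inv_natCast (sq_nonneg r) (by omega), ← pow_mul,
      pow_sub₀ r hr.ne' (by omega : 1 ≤ 2 * k), LamQ, smul_eq_mul]
    push_cast
    field_simp
    ring
  rw [setIntegral_congr_fun measurableSet_Ioi hsub,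
    integral_Ioi_pow_mul_comp_pow (by omega)
      fun u : ℝ => 2 * (k : ℝ) * (u ^ (k : ℝ)⁻¹ / (1 + u) ^ 2),
    integral_const_mul,
    integral_Ioi_rpow_div_one_add_sq (by positivity) (inv_lt_one_of_one_lt₀ hk1)]
  field_simp

theorem integral_pow_three_mul_pow_sub_one (hk : 0 < k) :
    ∫ r in Ioi (0 : ℝ), LamQ k r ^ 3 * r ^ (k - 1) = 2 * (k : ℝ) ^ 2 := by
  have hsub : ∀ r ∈ Ioi (0 : ℝ), LamQ k r ^ 3 * r ^ (k - 1) =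
      (((2 * k : ℕ) : ℝ) * r ^ (2 * k - 1)) •
        (4 * k ^ 2 * (r ^ (2 * k) / (1 + r ^ (2 * k)) ^ 3)) := by
    intro r (hr : 0 < r)
    rw [pow_sub₀ r hr.ne' (by omega : 1 ≤ 2 * k), pow_sub₀ r hr.ne' hk, LamQ, smul_eq_mul]
    push_cast
    field_simp
    ring
  rw [setIntegral_congr_fun measurableSet_Ioi hsub,
    integral_Ioi_pow_mul_comp_pow (by omega) fun u : ℝ => 4 * (k : ℝ) ^ 2 * (u / (1 + u) ^ 3),
    integral_const_mul, integral_Ioi_div_one_add_pow_three]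
  ring

theorem integral_pow_three_div_pow_add_one (hk : 0 < k) :
    ∫ r in Ioi (0 : ℝ), LamQ k r ^ 3 / r ^ (k + 1) = 2 * (k : ℝ) ^ 2 := by
  have hsub : ∀ r ∈ Ioi (0 : ℝ), LamQ k r ^ 3 / r ^ (k + 1) =
      (((2 * k : ℕ) : ℝ) * r ^ (2 * k - 1)) • (4 * k ^ 2 * ((1 + r ^ (2 * k)) ^ 3)⁻¹) := by
    intro r (hr : 0 < r)
    rw [pow_sub₀ r hr.ne' (by omega : 1 ≤ 2 * k), LamQ, smul_eq_mul]
    push_cast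
    field_simp
    ring
  rw [setIntegral_congr_fun measurableSet_Ioi hsub,
    integral_Ioi_pow_mul_comp_pow (by omega) fun u : ℝ => 4 * (k : ℝ) ^ 2 * ((1 + u) ^ 3)⁻¹,
    integral_const_mul, integral_Ioi_inv_one_add_pow_three]
  ring

end LamQ

theorem sin_pi_div_natCast_pos {k : ℕ} (hk : 2 ≤ k) : 0 < sin (π / k) :=
  sin_pos_of_pos_of_lt_pi (by positivity) (div_lt_self pi_pos (by exact_mod_cast hk))

theorem rhoK_sq {k : ℕ} (hk : 2 ≤ k) : rhoK k ^ 2 = 8 * k / π * sin (π / k) :=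
  have := sin_pi_div_natCast_pos hk
  sq_sqrt (by positivity)

/-- the explicit integrals of `ΛQ` and the resulting identities
for `ρ_k` and `γ_k`. -/
theorem stmt16 (k : ℕ) (hk : 2 ≤ k) :
    (∫ r in Ioi (0 : ℝ), LamQ k r ^ 2 * r) = 2 * Real.pi / Real.sin (Real.pi / k) ∧
    (∫ r in Ioi (0 : ℝ), LamQ k r ^ 3 * r ^ (k - 1)) = 2 * (k : ℝ) ^ 2 ∧
    (∫ r in Ioi (0 : ℝ), LamQ k r ^ 3 / r ^ (k + 1)) = 2 * (k : ℝ) ^ 2 ∧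
    rhoK k ^ 2 = 16 * k * (∫ r in Ioi (0 : ℝ), LamQ k r ^ 2 * r)⁻¹ ∧
    gammaK k * (∫ r in Ioi (0 : ℝ), LamQ k r ^ 2 * r) = 8 * (k : ℝ) ^ 2 ∧
    4 * (∫ r in Ioi (0 : ℝ), LamQ k r ^ 3 * r ^ (k - 1)) = 8 * (k : ℝ) ^ 2 ∧
    4 * (∫ r in Ioi (0 : ℝ), LamQ k r ^ 3 / r ^ (k + 1)) = 8 * (k : ℝ) ^ 2 := by
  have hsin := (sin_pi_div_natCast_pos hk).ne'
  rw [LamQ.integral_sq_mul_self hk, LamQ.integral_pow_three_mul_pow_sub_one (by omega),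
    LamQ.integral_pow_three_div_pow_add_one (by omega), gammaK, rhoK_sq hk]
  refine ⟨rfl, rfl, rfl, ?_, ?_, by ring, by ring⟩
  · field_simp
    norm_num
  · field_simp

end
end

section
/- Let X, Y, Z be real Banach spaces, x₀ ∈ X, y₀ ∈ Y, and δ₁, δ₂ > 0. Let G be a map from the product of closed balls B̄(x₀, δ₁) × B̄(y₀, δ₂) to Z which is continuous, and such that for each fixed x ∈ B̄(x₀, δ₁) the map y ↦ G(x, y) is continuously Fréchet differentiable on B̄(y₀, δ₂) with partial derivative D_yG(x, y) ∈ L(Y, Z). Suppose G(x₀, y₀) = 0 and that L₀ := D_yG(x₀, y₀) has a bounded inverse L₀⁻¹ ∈ L(Z, Y). Suppose moreover that for all x ∈ B̄(x₀, δ₁) and y ∈ B̄(y₀, δ₂): ‖L₀ - D_yG(x, y)‖_{L(Y,Z)} ≤ 1/(3 ‖L₀⁻¹‖_{L(Z,Y)}) and ‖G(x, y₀)‖_Z ≤ δ₂/(3 ‖L₀⁻¹‖_{L(Z,Y)}). Then there exists a continuous function ς : B̄(x₀, δ₁) → B̄(y₀, δ₂) such that for every x ∈ B̄(x₀, δ₁),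 y = ς(x) is the unique solution of G(x, y) = 0 with y ∈ B̄(y₀, δ₂). -/
open Metric Set Filter Topology Function
open scoped NNReal

/-! The Newton-type map `Φ x y = y - L₀⁻¹ G(x, y)` has the zeros of `G(x, ·)` as its fixed points.
The bound on `L₀ - D_yG` and the mean value theorem make each `Φ x` a `1/3`-contraction of
`B̄(y₀, δ₂)`, and the bound on `G(x, y₀)` makes it map this ball into itself, so Banach's fixed point
theorem gives `ς x`. Since the contraction constant is uniform in `x`, the distance between two
fixed points is controlled by `‖G(x, ς x') - G(x', ς x')‖`, whence the continuity of `ς`. -/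

section FixedPoint

variable {X Y : Type*} [TopologicalSpace X] [MetricSpace Y]

theorem dist_le_of_isFixedPt_of_lipschitzOnWith {K : ℝ≥0} (hK : K < 1) {f g : Y → Y}
    {s : Set Y} (hf : LipschitzOnWith K f s) {y y' : Y} (hy : y ∈ s) (hy' : y' ∈ s)
    (hfy : IsFixedPt f y) (hgy' : IsFixedPt g y') :
    dist y y' ≤ dist (f y') (g y') / (1 - K) := by
  have hK' : (0 : ℝ) < 1 - K := sub_pos.2 (by exact_mod_cast hK)
  rw [le_div_iff₀ hK']
  have := calc
    dist y y' = dist (f y) (g y') := by rw [hfy.eq, hgy'.eq]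
    _ ≤ dist (f y) (f y') + dist (f y') (g y') := dist_triangle _ _ _
    _ ≤ K * dist y y' + dist (f y') (g y') := by gcongr; exact hf.dist_le_mul y hy y' hy'
  linarith

theorem LipschitzOnWith.mapsTo_closedBall {K : ℝ≥0} {f : Y → Y} {y₀ : Y} {r : ℝ}
    (hf : LipschitzOnWith K f (closedBall y₀ r)) (h : dist (f y₀) y₀ ≤ (1 - K) * r) :
    MapsTo f (closedBall y₀ r) (closedBall y₀ r) := by
  intro y hy
  have hy₀ : y₀ ∈ closedBall y₀ r := mem_closedBall_self (dist_nonneg.trans hy)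
  rw [mem_closedBall] at hy ⊢
  calc
    dist (f y) y₀ ≤ dist (f y) (f y₀) + dist (f y₀) y₀ := dist_triangle _ _ _
    _ ≤ K * r + (1 - K) * r := by
      gcongr
      exact (hf.dist_le_mul y (mem_closedBall.2 hy) y₀ hy₀).trans (by gcongr)
    _ = r := by ring

theorem exists_continuousOn_fixedPt_of_lipschitzOnWith {t : Set X} {s : Set Y}
    (hs : IsComplete s) (hne : s.Nonempty) {K : ℝ≥0} (hK : K < 1) {Φ : X → Y → Y}
    (hmaps : ∀ x ∈ t, MapsTo (Φ x) s s) (hlip : ∀ x ∈ t, LipschitzOnWith K (Φ x) s)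
    (hcont : ∀ y ∈ s, ContinuousOn (fun x => Φ x y) t) :
    ∃ ς : X → Y, ContinuousOn ς t ∧ ∀ x ∈ t, ς x ∈ s ∧ IsFixedPt (Φ x) (ς x) ∧
      ∀ y ∈ s, IsFixedPt (Φ x) y → y = ς x := by
  obtain ⟨y₀, hy₀⟩ := hne
  have : Nonempty Y := ⟨y₀⟩
  have hex : ∀ x ∈ t, ∃ y ∈ s, IsFixedPt (Φ x) y := fun x hx => by
    obtain ⟨y, hy, hfix, -⟩ := ContractingWith.exists_fixedPoint' hs (hmaps x hx)
      ⟨hK, (hlip x hx).mapsToRestrict (hmaps x hx)⟩ hy₀ (edist_ne_top _ _)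
    exact ⟨y, hy, hfix⟩
  choose! ς hςs hςfix using hex
  refine ⟨ς, fun x' hx' => ?_, fun x hx => ⟨hςs x hx, hςfix x hx, fun y hy hfix => ?_⟩⟩
  · rw [ContinuousWithinAt, tendsto_iff_dist_tendsto_zero]
    have hlim : Tendsto (fun x => dist (Φ x (ς x')) (Φ x' (ς x')) / (1 - K)) (𝓝[t] x') (𝓝 0) := by
      simpa using ((hcont _ (hςs x' hx') x' hx').dist
        (tendsto_const_nhds (x := Φ x' (ς x')))).div_const (1 - (K : ℝ))
    refine squeeze_zero' (Eventually.of_forall fun _ => dist_nonneg) ?_ hlim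
    filter_upwards [self_mem_nhdsWithin] with x hx
    exact dist_le_of_isFixedPt_of_lipschitzOnWith hK (hlip x hx) (hςs x hx) (hςs x' hx')
      (hςfix x hx) (hςfix x' hx')
  · simpa using dist_le_of_isFixedPt_of_lipschitzOnWith hK (hlip x hx) hy (hςs x hx) hfix
      (hςfix x hx)

end FixedPoint

theorem Convex.norm_sub_symm_apply_sub_le {Y Z : Type*} [NormedAddCommGroup Y] [NormedSpace ℝ Y]
    [NormedAddCommGroup Z] [NormedSpace ℝ Z] {s : Set Y} (hs : Convex ℝ s) {f : Y → Z}
    {f' : Y → Y →L[ℝ] Z} (hf : ∀ y ∈ s, HasFDerivWithinAt f (f' y) s y) (L : Y ≃L[ℝ] Z)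
    {C : ℝ} (hC : ∀ y ∈ s, ‖(L : Y →L[ℝ] Z) - f' y‖ ≤ C) {y y' : Y} (hy : y ∈ s) (hy' : y' ∈ s) :
    ‖(y - L.symm (f y)) - (y' - L.symm (f y'))‖ ≤ ‖(L.symm : Z →L[ℝ] Y)‖ * C * ‖y - y'‖ := by
  have hmv : ‖(L y - f y) - (L y' - f y')‖ ≤ C * ‖y - y'‖ :=
    hs.norm_image_sub_le_of_norm_hasFDerivWithin_le
      (fun w hw => (L : Y →L[ℝ] Z).hasFDerivAt.hasFDerivWithinAt.sub (hf w hw)) hC hy' hy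
  calc
    ‖(y - L.symm (f y)) - (y' - L.symm (f y'))‖
        = ‖(L.symm : Z →L[ℝ] Y) ((L y - f y) - (L y' - f y'))‖ := by simp
    _ ≤ ‖(L.symm : Z →L[ℝ] Y)‖ * (C * ‖y - y'‖) := (L.symm : Z →L[ℝ] Y).le_opNorm_of_le hmv
    _ = _ := by ring

theorem stmt18_general {X Y Z : Type*}
    [NormedAddCommGroup X]
    [NormedAddCommGroup Y] [NormedSpace ℝ Y] [CompleteSpace Y]
    [NormedAddCommGroup Z] [NormedSpace ℝ Z]
    (x₀ : X) (y₀ : Y) (δ₁ δ₂ : ℝ) (hδ₂ : 0 < δ₂)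
    (G : X → Y → Z) (DG : X → Y → (Y →L[ℝ] Z))
    (hGcont : ContinuousOn (fun p : X × Y => G p.1 p.2)
      (closedBall x₀ δ₁ ×ˢ closedBall y₀ δ₂))
    (hderiv : ∀ x ∈ closedBall x₀ δ₁, ∀ y ∈ closedBall y₀ δ₂,
      HasFDerivWithinAt (G x) (DG x y) (closedBall y₀ δ₂) y)
    (L₀ : Y ≃L[ℝ] Z)
    (hbound1 : ∀ x ∈ closedBall x₀ δ₁, ∀ y ∈ closedBall y₀ δ₂,
      ‖(L₀ : Y →L[ℝ] Z) - DG x y‖ ≤ 1 / (3 * ‖(L₀.symm : Z →L[ℝ] Y)‖))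
    (hbound2 : ∀ x ∈ closedBall x₀ δ₁,
      ‖G x y₀‖ ≤ δ₂ / (3 * ‖(L₀.symm : Z →L[ℝ] Y)‖)) :
    ∃ ς : X → Y, ContinuousOn ς (closedBall x₀ δ₁) ∧
      ∀ x ∈ closedBall x₀ δ₁,
        ς x ∈ closedBall y₀ δ₂ ∧ G x (ς x) = 0 ∧
        ∀ y ∈ closedBall y₀ δ₂, G x y = 0 → y = ς x := by
  set T : Z →L[ℝ] Y := (L₀.symm : Z →L[ℝ] Y)
  set Φ : X → Y → Y := fun x y => y - L₀.symm (G x y)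
  have hscale : ∀ a, 0 ≤ a → ‖T‖ * (a / (3 * ‖T‖)) ≤ a / 3 := fun a ha => by
    rcases (norm_nonneg T).eq_or_lt with hT | hT
    · rw [← hT, zero_mul]; positivity
    · exact le_of_eq (by field_simp)
  have hlip : ∀ x ∈ closedBall x₀ δ₁, LipschitzOnWith 3⁻¹ (Φ x) (closedBall y₀ δ₂) :=
    fun x hx => LipschitzOnWith.of_dist_le_mul fun y hy y' hy' => by
      rw [dist_eq_norm, dist_eq_norm]
      calc
        _ ≤ ‖T‖ * (1 / (3 * ‖T‖)) * ‖y - y'‖ :=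
          (convex_closedBall y₀ δ₂).norm_sub_symm_apply_sub_le (hderiv x hx) L₀ (hbound1 x hx) hy hy'
        _ ≤ _ := by gcongr; simpa using hscale 1 zero_le_one
  have hmaps : ∀ x ∈ closedBall x₀ δ₁, MapsTo (Φ x) (closedBall y₀ δ₂) (closedBall y₀ δ₂) :=
    fun x hx => (hlip x hx).mapsTo_closedBall <| calc
      dist (Φ x y₀) y₀ = ‖T (G x y₀)‖ := by simp [Φ, T]
      _ ≤ ‖T‖ * (δ₂ / (3 * ‖T‖)) := T.le_opNorm_of_le (hbound2 x hx)
      _ ≤ δ₂ / 3 := hscale δ₂ hδ₂.le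
      _ ≤ (1 - ((3⁻¹ : ℝ≥0) : ℝ)) * δ₂ := by norm_num; linarith
  have hcont : ∀ y ∈ closedBall y₀ δ₂, ContinuousOn (fun x => Φ x y) (closedBall x₀ δ₁) :=
    fun y hy => continuousOn_const.sub <| T.continuous.comp_continuousOn <|
      hGcont.comp (continuousOn_id.prodMk continuousOn_const) fun x hx => ⟨hx, hy⟩
  have hfix : ∀ x y, IsFixedPt (Φ x) y ↔ G x y = 0 := by simp [IsFixedPt, Φ]
  obtain ⟨ς, hς, hspec⟩ := exists_continuousOn_fixedPt_of_lipschitzOnWith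
    isClosed_closedBall.isComplete (nonempty_closedBall.2 hδ₂.le) (by norm_num) hmaps hlip hcont
  refine ⟨ς, hς, fun x hx => ?_⟩
  obtain ⟨hmem, hςfix, huniq⟩ := hspec x hx
  exact ⟨hmem, (hfix x _).1 hςfix, fun y hy hGy => huniq y hy ((hfix x y).2 hGy)⟩

/-- a quantitative implicit function theorem with uniform control
on the size of the ball on which the implicit function is defined. -/
theorem stmt18 {X Y Z : Type*}
    [NormedAddCommGroup X] [NormedSpace ℝ X] [CompleteSpace X]
    [NormedAddCommGroup Y] [NormedSpace ℝ Y] [CompleteSpace Y]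
    [NormedAddCommGroup Z] [NormedSpace ℝ Z] [CompleteSpace Z]
    (x₀ : X) (y₀ : Y) (δ₁ δ₂ : ℝ) (hδ₁ : 0 < δ₁) (hδ₂ : 0 < δ₂)
    (G : X → Y → Z) (DG : X → Y → (Y →L[ℝ] Z))
    (hGcont : ContinuousOn (fun p : X × Y => G p.1 p.2)
      (closedBall x₀ δ₁ ×ˢ closedBall y₀ δ₂))
    (hderiv : ∀ x ∈ closedBall x₀ δ₁, ∀ y ∈ closedBall y₀ δ₂,
      HasFDerivWithinAt (G x) (DG x y) (closedBall y₀ δ₂) y)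
    (hDGcont : ∀ x ∈ closedBall x₀ δ₁, ContinuousOn (DG x) (closedBall y₀ δ₂))
    (hG0 : G x₀ y₀ = 0)
    (L₀ : Y ≃L[ℝ] Z) (hL₀ : (L₀ : Y →L[ℝ] Z) = DG x₀ y₀)
    (hbound1 : ∀ x ∈ closedBall x₀ δ₁, ∀ y ∈ closedBall y₀ δ₂,
      ‖(L₀ : Y →L[ℝ] Z) - DG x y‖ ≤ 1 / (3 * ‖(L₀.symm : Z →L[ℝ] Y)‖))
    (hbound2 : ∀ x ∈ closedBall x₀ δ₁,
      ‖G x y₀‖ ≤ δ₂ / (3 * ‖(L₀.symm : Z →L[ℝ] Y)‖)) :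
    ∃ ς : X → Y, ContinuousOn ς (closedBall x₀ δ₁) ∧
      ∀ x ∈ closedBall x₀ δ₁,
        ς x ∈ closedBall y₀ δ₂ ∧ G x (ς x) = 0 ∧
        ∀ y ∈ closedBall y₀ δ₂, G x y = 0 → y = ς x :=
  stmt18_general x₀ y₀ δ₁ δ₂ hδ₂ G DG hGcont hderiv L₀ hbound1 hbound2
end
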